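/- arXiv:2106.11158 — 6 statements merged into one kernel-verified Lean document; each statement's English description precedes it below -/
import Mathlib

section
/- If f(z) = \sum_{n=0}^\infty a_n z^n is analytic on the unit disk with |f(z)| < 1 for all |z| < 1, then \sum_{n=0}^\infty |a_n| r^n \le 1 for all 0 \le r \le 1/3. -/
open Metric Complex FormalMultilinearSeries Filter Set

lemma hasFPS (b : ℕ → ℂ) (F : ℂ → ℂ)
    (h : ∀ z ∈ ball (0 : ℂ) 1, HasSum (fun n => b n * z ^ n) (F z)) :
    HasFPowerSeriesOnBall F (ofScalars ℂ b) 0 1 := by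
  constructor
  · refine ENNReal.le_of_forall_nnreal_lt fun r hr => ?_
    have hr1 : (r : ℝ) < 1 := by exact_mod_cast hr
    have hmem : ((r : ℝ) : ℂ) ∈ ball (0 : ℂ) 1 := by
      simp only [mem_ball_zero_iff, Complex.norm_real, Real.norm_eq_abs,
        _root_.abs_of_nonneg r.coe_nonneg]
      exact hr1
    have hs := (h _ hmem).summable.tendsto_atTop_zero
    refine le_radius_of_tendsto _ (l := 0) ?_
    rw [tendsto_zero_iff_norm_tendsto_zero] at hs
    have : (fun n => ‖ofScalars ℂ b n‖ * (r : ℝ) ^ n)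
        = fun n => ‖b n * ((r : ℝ) : ℂ) ^ n‖ := by
      funext n
      rw [FormalMultilinearSeries.ofScalars_norm ℂ b n, norm_mul, norm_pow, Complex.norm_real,
        Real.norm_eq_abs, _root_.abs_of_nonneg r.coe_nonneg]
    rw [this]
    exact hs
  · exact one_pos
  · intro y hy
    have hy' : y ∈ ball (0 : ℂ) 1 := by
      rw [← ENNReal.coe_one, Metric.emetric_ball_nnreal] at hy
      simpa using hy
    simp_rw [ofScalars_apply_eq, smul_eq_mul, zero_add]
    exact h y hy'

lemma coeff_le_one (b : ℕ → ℂ) (F : ℂ → ℂ)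
    (hF : HasFPowerSeriesOnBall F (ofScalars ℂ b) 0 1)
    (hb : ∀ z ∈ ball (0 : ℂ) 1, ‖F z‖ ≤ 1) (n : ℕ) :
    ‖b n‖ ≤ 1 := by
  have hdiff : DifferentiableOn ℂ F (ball (0 : ℂ) 1) := by
    have := hF.differentiableOn
    rwa [← ENNReal.coe_one, Metric.emetric_ball_nnreal] at this
  suffices h : ∀ ρ : ℝ, 0 < ρ → ρ < 1 → ‖b n‖ ≤ ρ⁻¹ ^ n by
    have ht : Tendsto (fun ρ : ℝ => ρ⁻¹ ^ n) (nhdsWithin 1 (Set.Iio 1)) (nhds 1) := by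
      have : ContinuousAt (fun ρ : ℝ => ρ⁻¹ ^ n) 1 :=
        ((continuousAt_id.inv₀ one_ne_zero).pow n)
      simpa using this.tendsto.mono_left nhdsWithin_le_nhds
    refine ge_of_tendsto ht ?_
    filter_upwards [Ioo_mem_nhdsLT_of_mem (Set.mem_Ioc.2 ⟨zero_lt_one, le_rfl⟩)] with ρ hρ
    exact h ρ hρ.1 hρ.2
  intro ρ h0 h1
  set R : NNReal := ⟨ρ, h0.le⟩ with hR
  have hRρ : (R : ℝ) = ρ := rfl
  have habsR : |(R : ℝ)| = ρ := _root_.abs_of_nonneg R.coe_nonneg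
  have hd2 : DifferentiableOn ℂ F (closedBall (0 : ℂ) R) := by
    refine hdiff.mono (fun x hx => ?_)
    rw [mem_closedBall_zero_iff] at hx
    rw [mem_ball_zero_iff]
    exact lt_of_le_of_lt hx h1
  have hps : HasFPowerSeriesOnBall F (cauchyPowerSeries F 0 R) 0 R :=
    hd2.hasFPowerSeriesOnBall (by exact_mod_cast h0)
  have heq : ofScalars ℂ b = cauchyPowerSeries F 0 R :=
    hF.hasFPowerSeriesAt.eq_formalMultilinearSeries hps.hasFPowerSeriesAt
  have hnorm := norm_cauchyPowerSeries_le F 0 (R : ℝ) n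
  have hmem : ∀ θ : ℝ, circleMap 0 (R : ℝ) θ ∈ ball (0 : ℂ) 1 := by
    intro θ
    simp only [mem_ball_zero_iff, norm_circleMap_zero, habsR]
    exact h1
  have hint : (∫ θ : ℝ in (0)..2 * Real.pi, ‖F (circleMap 0 (R : ℝ) θ)‖) ≤ 2 * Real.pi := by
    have hcont : Continuous fun θ : ℝ => ‖F (circleMap 0 (R : ℝ) θ)‖ :=
      (hdiff.continuousOn.comp_continuous (continuous_circleMap 0 R) hmem).norm
    calc (∫ θ : ℝ in (0)..2 * Real.pi, ‖F (circleMap 0 (R : ℝ) θ)‖)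
        ≤ ∫ _ : ℝ in (0)..2 * Real.pi, (1 : ℝ) := by
          refine intervalIntegral.integral_mono_on Real.two_pi_pos.le
            (hcont.intervalIntegrable _ _) (intervalIntegrable_const) ?_
          intro θ _
          exact hb _ (hmem θ)
      _ = 2 * Real.pi := by simp
  have habs : ‖ofScalars ℂ b n‖ = ‖b n‖ := by
    rw [FormalMultilinearSeries.ofScalars_norm ℂ b n]
  rw [← habs, heq]
  refine hnorm.trans ?_
  rw [habsR]
  have h2pi : (0 : ℝ) < (2 * Real.pi)⁻¹ := by positivity
  calc (2 * Real.pi)⁻¹ * (∫ θ : ℝ in (0)..2 * Real.pi, ‖F (circleMap 0 (R : ℝ) θ)‖) * ρ⁻¹ ^ n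
      ≤ (2 * Real.pi)⁻¹ * (2 * Real.pi) * ρ⁻¹ ^ n := by
        have hp : (0:ℝ) ≤ ρ⁻¹ ^ n := by positivity
        have := mul_le_mul_of_nonneg_left hint h2pi.le
        nlinarith
    _ = ρ⁻¹ ^ n := by
        rw [inv_mul_cancel₀ Real.two_pi_pos.ne', one_mul]

lemma den_ne_zero {α w : ℂ} (hα : ‖α‖ < 1) (hw : ‖w‖ < 1) :
    (1 : ℂ) - (starRingEnd ℂ) α * w ≠ 0 := by
  intro h
  have h1 : (1 : ℂ) = (starRingEnd ℂ) α * w := by linear_combination h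
  have : ‖(starRingEnd ℂ) α * w‖ < 1 := by
    rw [norm_mul, Complex.norm_conj]
    calc ‖α‖ * ‖w‖ ≤ ‖α‖ * 1 :=
          mul_le_mul_of_nonneg_left hw.le (norm_nonneg _)
      _ < 1 := by rwa [mul_one]
  rw [← h1] at this
  simp at this

lemma mobius_lt_one {α w : ℂ} (hα : ‖α‖ < 1) (hw : ‖w‖ < 1) :
    ‖(w - α) / (1 - (starRingEnd ℂ) α * w)‖ < 1 := by
  have hα2 : α.re * α.re + α.im * α.im < 1 := by
    have h := Complex.sq_norm α
    rw [Complex.normSq_apply] at h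
    nlinarith [norm_nonneg α]
  have hw2 : w.re * w.re + w.im * w.im < 1 := by
    have h := Complex.sq_norm w
    rw [Complex.normSq_apply] at h
    nlinarith [norm_nonneg w]
  have hkey : Complex.normSq (w - α) < Complex.normSq (1 - (starRingEnd ℂ) α * w) := by
    simp only [Complex.normSq_apply, Complex.sub_re, Complex.sub_im, Complex.mul_re,
      Complex.mul_im, Complex.one_re, Complex.one_im, Complex.conj_re, Complex.conj_im]
    nlinarith [mul_pos (sub_pos.2 hα2) (sub_pos.2 hw2)]
  have habs : ‖w - α‖ < ‖1 - (starRingEnd ℂ) α * w‖ := by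
    have h1 := Complex.sq_norm (w - α)
    have h2 := Complex.sq_norm (1 - (starRingEnd ℂ) α * w)
    refine lt_of_pow_lt_pow_left₀ 2 (norm_nonneg _) ?_
    rw [h1, h2]; exact hkey
  have hpos : 0 < ‖1 - (starRingEnd ℂ) α * w‖ :=
    norm_pos_iff.2 (den_ne_zero hα hw)
  rw [norm_div, div_lt_one hpos]
  exact habs

lemma schwarz_pick_zero (F : ℂ → ℂ) (hd : DifferentiableOn ℂ F (ball (0 : ℂ) 1))
    (hm : MapsTo F (ball (0 : ℂ) 1) (ball (0 : ℂ) 1)) :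
    ‖deriv F 0‖ ≤ 1 - ‖F 0‖ ^ 2 := by
  set α := F 0 with hαdef
  have hα : ‖α‖ < 1 := by
    have := hm (mem_ball_self one_pos)
    rwa [mem_ball_zero_iff] at this
  set c : ℂ := (starRingEnd ℂ) α with hcdef
  set σ : ℂ → ℂ := fun w => (w - α) / (1 - c * w) with hσdef
  have hσdiff : ∀ w : ℂ, ‖w‖ < 1 → DifferentiableAt ℂ σ w := by
    intro w hw
    apply DifferentiableAt.div
    · exact (differentiableAt_id.sub_const α)
    · exact (differentiableAt_const _).sub ((differentiableAt_const c).mul differentiableAt_id)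
    · exact den_ne_zero hα hw
  set g : ℂ → ℂ := σ ∘ F with hgdef
  have hgd : DifferentiableOn ℂ g (ball (0 : ℂ) 1) := by
    intro z hz
    have h1 : ‖F z‖ < 1 := by
      have := hm hz; rwa [mem_ball_zero_iff] at this
    exact (hσdiff (F z) h1).comp_differentiableWithinAt z (hd z hz)
  have hg0 : g 0 = 0 := by
    simp only [hgdef, Function.comp_apply, hσdef, ← hαdef, sub_self, zero_div]
  have hmaps : MapsTo g (ball (0 : ℂ) 1) (ball (g 0) 1) := by
    rw [hg0]
    intro z hz
    have h1 : ‖F z‖ < 1 := by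
      have := hm hz; rwa [mem_ball_zero_iff] at this
    rw [mem_ball_zero_iff]
    exact mobius_lt_one hα h1
  have hder : ‖deriv g 0‖ ≤ 1 := by
    have := Complex.norm_deriv_le_div_of_mapsTo_ball hgd (hmaps.mono_right ball_subset_closedBall) one_pos
    simpa using this
  -- chain rule
  have hFd : DifferentiableAt ℂ F 0 :=
    hd.differentiableAt (isOpen_ball.mem_nhds (mem_ball_self one_pos))
  have hchain : deriv g 0 = deriv σ α * deriv F 0 := by
    rw [hgdef, deriv_comp 0 (hσdiff α hα) hFd, hαdef]
  -- derivative of σ at α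
  have hσα : HasDerivAt σ ((1 * (1 - c * α) - (α - α) * (0 - (c * 1))) / (1 - c * α) ^ 2) α := by
    exact ((hasDerivAt_id α).sub_const α).div
      (((hasDerivAt_const α (1 : ℂ))).sub ((hasDerivAt_id α).const_mul c)) (den_ne_zero hα hα)
  have hne : (1 : ℂ) - c * α ≠ 0 := den_ne_zero hα hα
  have hσα' : deriv σ α = (1 - c * α)⁻¹ := by
    rw [hσα.deriv]
    simp only [one_mul, sub_self, zero_mul, sub_zero, sq, mul_zero, zero_sub, mul_one, neg_neg]
    exact div_mul_cancel_left₀ hne _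
  -- 1 - c * α = 1 - |α|²
  have hca : (1 : ℂ) - c * α = ((1 - ‖α‖ ^ 2 : ℝ) : ℂ) := by
    rw [hcdef]
    rw [mul_comm, Complex.mul_conj]
    rw [Complex.sq_norm]
    push_cast
    ring
  have habsca : ‖(1 : ℂ) - c * α‖ = 1 - ‖α‖ ^ 2 := by
    rw [hca, Complex.norm_real, Real.norm_eq_abs, _root_.abs_of_nonneg]
    nlinarith [norm_nonneg α]
  have hpos : 0 < 1 - ‖α‖ ^ 2 := by nlinarith [norm_nonneg α]
  rw [hchain, norm_mul, hσα', norm_inv, habsca] at hder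
  rw [inv_mul_le_iff₀ hpos] at hder
  simpa [hαdef] using hder

section aux

lemma ofScalars_coeff' (b : ℕ → ℂ) (n : ℕ) : (ofScalars ℂ b).coeff n = b n := by
  have := ofScalars_apply_eq (E := ℂ) b 1 n
  simp only [smul_eq_mul, one_pow, mul_one] at this
  exact this

-- main coefficient bound |a n| ≤ 1 - |a 0|^2 for n ≥ 1
lemma coeff_bound (f : ℂ → ℂ) (a : ℕ → ℂ)
    (hsum : ∀ z ∈ ball (0 : ℂ) 1, HasSum (fun n => a n * z ^ n) (f z))
    (hb : ∀ z ∈ ball (0 : ℂ) 1, ‖f z‖ < 1)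
    (habs1 : ∀ m, ‖a m‖ ≤ 1)
    (ha0 : ‖a 0‖ < 1)
    (n : ℕ) (hn : 0 < n) :
    ‖a n‖ ≤ 1 - ‖a 0‖ ^ 2 := by
  -- the section function H(w) = ∑ a_{nk} w^k
  set H : ℂ → ℂ := fun w => ∑' k, a (n * k) * w ^ k with hHdef
  have hHsum : ∀ w ∈ ball (0 : ℂ) 1, HasSum (fun k => a (n * k) * w ^ k) (H w) := by
    intro w hw
    rw [mem_ball_zero_iff] at hw
    have : Summable (fun k => a (n * k) * w ^ k) := by
      refine Summable.of_norm_bounded (g := fun k => ‖w‖ ^ k)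
        (summable_geometric_of_lt_one (norm_nonneg w) hw) (fun k => ?_)
      rw [norm_mul, norm_pow]
      calc ‖a (n * k)‖ * ‖w‖ ^ k ≤ 1 * ‖w‖ ^ k := by
            refine mul_le_mul_of_nonneg_right ?_ (by positivity)
            exact habs1 _
        _ = ‖w‖ ^ k := by rw [one_mul]
    exact this.hasSum
  have hHfps : HasFPowerSeriesOnBall H (ofScalars ℂ (fun k => a (n * k))) 0 1 :=
    hasFPS _ H hHsum
  have hHdiff : DifferentiableOn ℂ H (ball (0 : ℂ) 1) := by
    have := hHfps.differentiableOn
    rwa [← ENNReal.coe_one, Metric.emetric_ball_nnreal] at this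
  have hH0 : H 0 = a 0 := by
    have h1 := hHsum 0 (mem_ball_self one_pos)
    have h2 : HasSum (fun k => a (n * k) * (0 : ℂ) ^ k) (a 0) := by
      have := hasSum_single (f := fun k => a (n * k) * (0 : ℂ) ^ k) 0
        (fun m hm => by simp [zero_pow hm])
      simpa using this
    exact (h1.unique h2)
  have hHderiv : deriv H 0 = a n := by
    have h1 := hHfps.hasFPowerSeriesAt.deriv
    rw [h1]
    have h2 := ofScalars_apply_eq (E := ℂ) (fun k => a (n * k)) (1 : ℂ) 1
    simpa using h2
  -- key: H maps ball into ball
  have hζ : IsPrimitiveRoot (Complex.exp (2 * Real.pi * I / n)) n :=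
    Complex.isPrimitiveRoot_exp n hn.ne'
  set ζ : ℂ := Complex.exp (2 * Real.pi * I / n) with hζdef
  have hζabs : ‖ζ‖ = 1 := by
    rw [hζdef]
    have : (2 * (Real.pi : ℂ) * I / n) = ((2 * Real.pi / n : ℝ) : ℂ) * I := by
      push_cast; ring
    rw [this, Complex.norm_exp_ofReal_mul_I]
  have hkey : ∀ z : ℂ, ‖z‖ < 1 → ‖H (z ^ n)‖ < 1 := by
    intro z hz
    have hmemj : ∀ j : ℕ, ζ ^ j * z ∈ ball (0 : ℂ) 1 := by
      intro j
      rw [mem_ball_zero_iff]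
      show ‖ζ ^ j * z‖ < 1
      rw [norm_mul, norm_pow, hζabs, one_pow, one_mul]
      exact hz
    -- the averaging identity
    have inner : ∀ m : ℕ, (∑ j ∈ Finset.range n, a m * (ζ ^ j * z) ^ m)
        = if n ∣ m then (n : ℂ) * (a m * z ^ m) else 0 := by
      intro m
      have hterm : ∀ j : ℕ, a m * (ζ ^ j * z) ^ m = (ζ ^ m) ^ j * (a m * z ^ m) := by
        intro j
        rw [mul_pow, ← pow_mul, mul_comm j m, pow_mul]
        ring
      rw [Finset.sum_congr rfl (fun j _ => hterm j), ← Finset.sum_mul]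
      by_cases hdvd : n ∣ m
      · have h1 : ζ ^ m = 1 := (hζ.pow_eq_one_iff_dvd m).2 hdvd
        simp [hdvd, h1, Finset.sum_const]
      · have h1 : ζ ^ m ≠ 1 := fun h => hdvd ((hζ.pow_eq_one_iff_dvd m).1 h)
        rw [geom_sum_eq h1]
        have h2 : (ζ ^ m) ^ n = 1 := by
          rw [← pow_mul, mul_comm m n, pow_mul, hζ.pow_eq_one, one_pow]
        rw [h2, sub_self, zero_div, zero_mul, if_neg hdvd]
    have hswap : (∑ j ∈ Finset.range n, f (ζ ^ j * z))
        = ∑' m : ℕ, ∑ j ∈ Finset.range n, a m * (ζ ^ j * z) ^ m := by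
      rw [Summable.tsum_finsetSum (fun j _ => (hsum _ (hmemj j)).summable)]
      exact Finset.sum_congr rfl fun j _ => ((hsum _ (hmemj j)).tsum_eq).symm
    have hinj : Function.Injective (fun k : ℕ => n * k) :=
      fun x y h => Nat.eq_of_mul_eq_mul_left hn h
    have hsupp : Function.support (fun m : ℕ => if n ∣ m then (n : ℂ) * (a m * z ^ m) else 0)
        ⊆ Set.range (fun k : ℕ => n * k) := by
      intro m hm
      rw [Function.mem_support] at hm
      rcases em (n ∣ m) with ⟨k, rfl⟩ | h
      · exact ⟨k, rfl⟩
      · exact (hm (if_neg h)).elim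
    have hmul : (n : ℂ) * H (z ^ n) = ∑ j ∈ Finset.range n, f (ζ ^ j * z) := by
      calc (n : ℂ) * H (z ^ n) = ∑' k : ℕ, (n : ℂ) * (a (n * k) * (z ^ n) ^ k) := by
            rw [hHdef, tsum_mul_left]
        _ = ∑' k : ℕ, (if n ∣ n * k then (n : ℂ) * (a (n * k) * z ^ (n * k)) else 0) := by
            refine tsum_congr fun k => ?_
            rw [if_pos (Dvd.intro k rfl), ← pow_mul]
        _ = ∑' m : ℕ, (if n ∣ m then (n : ℂ) * (a m * z ^ m) else 0) :=
            hinj.tsum_eq hsupp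
        _ = ∑' m : ℕ, ∑ j ∈ Finset.range n, a m * (ζ ^ j * z) ^ m :=
            (tsum_congr fun m => (inner m).symm)
        _ = ∑ j ∈ Finset.range n, f (ζ ^ j * z) := hswap.symm
    -- strict bound
    have habssum : ‖∑ j ∈ Finset.range n, f (ζ ^ j * z)‖ < n := by
      calc ‖∑ j ∈ Finset.range n, f (ζ ^ j * z)‖
          ≤ ∑ j ∈ Finset.range n, ‖f (ζ ^ j * z)‖ :=
            (norm_sum_le _ _)
        _ < ∑ j ∈ Finset.range n, 1 := by
            refine Finset.sum_lt_sum_of_nonempty (Finset.nonempty_range_iff.2 hn.ne') ?_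
            intro j _
            exact hb _ (hmemj j)
        _ = n := by simp
    have : (n : ℝ) * ‖H (z ^ n)‖ < n := by
      have := habssum
      rw [← hmul, norm_mul, Complex.norm_natCast] at this
      exact this
    have hnpos : (0 : ℝ) < n := by exact_mod_cast hn
    nlinarith [norm_nonneg (H (z ^ n))]
  have hHmaps : MapsTo H (ball (0 : ℂ) 1) (ball (0 : ℂ) 1) := by
    intro w hw
    rw [mem_ball_zero_iff] at hw ⊢
    obtain ⟨z, hz⟩ := IsAlgClosed.exists_pow_nat_eq w hn
    have hzabs : ‖z‖ < 1 := by
      by_contra hcon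
      push_neg at hcon
      have : (1 : ℝ) ≤ ‖z‖ ^ n := by
        calc (1 : ℝ) = 1 ^ n := (one_pow n).symm
          _ ≤ ‖z‖ ^ n := pow_le_pow_left₀ (by norm_num) hcon n
      rw [← norm_pow, hz] at this
      exact absurd hw (not_lt.2 this)
    rw [← hz]
    exact hkey z hzabs
  have := schwarz_pick_zero H hHdiff hHmaps
  rw [hHderiv, hH0] at this
  exact this

end aux

set_option maxHeartbeats 1000000 in
/-- Bohr's inequality: if `f(z) = ∑ aₙ zⁿ` is analytic on the unit disk with `|f| < 1`,
then `∑ |aₙ| rⁿ ≤ 1` for `0 ≤ r ≤ 1/3`. -/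
theorem bohr_inequality (f : ℂ → ℂ) (a : ℕ → ℂ)
    (hsum : ∀ z ∈ ball (0 : ℂ) 1, HasSum (fun n => a n * z ^ n) (f z))
    (hb : ∀ z ∈ ball (0 : ℂ) 1, ‖f z‖ < 1)
    (r : ℝ) (hr0 : 0 ≤ r) (hr : r ≤ 1 / 3) :
    ∑' n : ℕ, ‖a n‖ * r ^ n ≤ 1 := by
  have hfps := hasFPS a f hsum
  have habs1 : ∀ m, ‖a m‖ ≤ 1 :=
    coeff_le_one a f hfps (fun z hz => (hb z hz).le)
  have hf0 : f 0 = a 0 := by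
    have h1 := hsum 0 (mem_ball_self one_pos)
    have h2 : HasSum (fun n => a n * (0 : ℂ) ^ n) (a 0) := by
      have := hasSum_single (f := fun n => a n * (0 : ℂ) ^ n) 0
        (fun m hm => by simp [zero_pow hm])
      simpa using this
    exact h1.unique h2
  have ha0 : ‖a 0‖ < 1 := by rw [← hf0]; exact hb 0 (mem_ball_self one_pos)
  have hcoef : ∀ n, 0 < n → ‖a n‖ ≤ 1 - ‖a 0‖ ^ 2 :=
    coeff_bound f a hsum hb habs1 ha0
  have hr1 : r < 1 := lt_of_le_of_lt hr (by norm_num)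
  have hsummable : Summable (fun n => ‖a n‖ * r ^ n) := by
    refine Summable.of_nonneg_of_le (fun n => by positivity) (fun n => ?_)
      (summable_geometric_of_lt_one hr0 hr1)
    calc ‖a n‖ * r ^ n ≤ 1 * r ^ n :=
          mul_le_mul_of_nonneg_right (habs1 n) (by positivity)
      _ = r ^ n := one_mul _
  rw [Summable.tsum_eq_zero_add hsummable]
  simp only [pow_zero, mul_one]
  set A := ‖a 0‖ with hA
  have hA0 : 0 ≤ A := norm_nonneg _
  have hA2 : 0 ≤ 1 - A ^ 2 := by nlinarith
  have htail_sum : Summable (fun i : ℕ => ‖a (i + 1)‖ * r ^ (i + 1)) :=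
    (summable_nat_add_iff 1).2 hsummable
  have hgeo : Summable (fun i : ℕ => (1 - A ^ 2) * r ^ (i + 1)) := by
    have h := (summable_geometric_of_lt_one hr0 hr1).mul_left ((1 - A ^ 2) * r)
    refine h.congr fun i => ?_
    ring
  have htail : (∑' i : ℕ, ‖a (i + 1)‖ * r ^ (i + 1))
      ≤ ∑' i : ℕ, (1 - A ^ 2) * r ^ (i + 1) := by
    refine Summable.tsum_le_tsum (fun i => ?_) htail_sum hgeo
    exact mul_le_mul_of_nonneg_right (hcoef (i + 1) (Nat.succ_pos i)) (by positivity)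
  have hgeoval : (∑' i : ℕ, (1 - A ^ 2) * r ^ (i + 1)) = (1 - A ^ 2) * r * (1 - r)⁻¹ := by
    calc (∑' i : ℕ, (1 - A ^ 2) * r ^ (i + 1))
        = ∑' i : ℕ, ((1 - A ^ 2) * r) * r ^ i := tsum_congr fun i => by ring
      _ = ((1 - A ^ 2) * r) * ∑' i : ℕ, r ^ i := tsum_mul_left
      _ = (1 - A ^ 2) * r * (1 - r)⁻¹ := by rw [tsum_geometric_of_lt_one hr0 hr1]
  have h1r : (0 : ℝ) < 1 - r := by linarith
  have hfrac : r * (1 - r)⁻¹ ≤ 1 / 2 := by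
    rw [← div_eq_mul_inv, div_le_iff₀ h1r]
    linarith
  have hhalf : (1 - A ^ 2) * r * (1 - r)⁻¹ ≤ (1 - A ^ 2) * (1 / 2) := by
    rw [mul_assoc]
    exact mul_le_mul_of_nonneg_left hfrac hA2
  have hfin : A + (1 - A ^ 2) * (1 / 2) ≤ 1 := by nlinarith [sq_nonneg (A - 1)]
  calc A + ∑' i : ℕ, ‖a (i + 1)‖ * r ^ (i + 1)
      ≤ A + (1 - A ^ 2) * r * (1 - r)⁻¹ := by rw [← hgeoval]; linarith
    _ ≤ A + (1 - A ^ 2) * (1 / 2) := by linarith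
    _ ≤ 1 := hfin
end

section
/- For the Möbius map \varphi_a(z) = (a - z)/(1 - a z) with a \in (0,1), the majorant series satisfies M_{\varphi_a}(r) > 1 if and only if r > 1/(1+2a), where M_{\varphi_a}(r) = a + (1-a^2) \sum_{n=1}^\infty a^{n-1} r^n. -/
/-- For the Möbius map `φ_a`, `a ∈ (0,1)`, the majorant series
`M(r) = a + (1-a²) ∑_{n≥1} a^{n-1} rⁿ` exceeds `1` iff `r > 1/(1+2a)`. -/
theorem moebius_majorant (a r : ℝ) (ha : a ∈ Set.Ioo (0 : ℝ) 1)
    (hr : r ∈ Set.Ico (0 : ℝ) 1) :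
    1 < a + (1 - a ^ 2) * ∑' n : ℕ, a ^ n * r ^ (n + 1) ↔ 1 / (1 + 2 * a) < r := by
  obtain ⟨ha0, ha1⟩ := ha
  obtain ⟨hr0, hr1⟩ := hr
  have har : a * r < 1 := by nlinarith
  have har0 : 0 ≤ a * r := by positivity
  have hsum : ∑' n : ℕ, a ^ n * r ^ (n + 1) = r / (1 - a * r) := by
    have : ∀ n : ℕ, a ^ n * r ^ (n + 1) = (a * r) ^ n * r := by
      intro n; ring
    rw [tsum_congr this, tsum_mul_right, tsum_geometric_of_lt_one har0 har]
    rw [div_eq_mul_inv, mul_comm]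
  rw [hsum]
  have h1 : 0 < 1 - a * r := by linarith
  have h2 : 0 < 1 + 2 * a := by linarith
  have hs : (r / (1 - a * r)) * (1 - a * r) = r := div_mul_cancel₀ r h1.ne'
  rw [div_lt_iff₀ h2]
  set s := r / (1 - a * r) with hsdef
  constructor
  · intro h
    nlinarith [mul_pos h1 (sub_pos.mpr h)]
  · intro h
    nlinarith [mul_pos h1 (sub_pos.mpr h)]
end

section
/- Suppose f is analytic on the unit disk with Re f(z) < 1, Taylor coefficients a_n, a_0 \in [0,1), and p \in (0,1]. Let \{\zeta_n\} be nonnegative continuous functions on [0,1) with \sum \zeta_n locally uniformly convergent, and suppose \zeta_0(r) \ge (2/p) \sum_{n=1}^\infty \zeta_n(r) for r \in [0, R_1]. Then a_0^p \zeta_0(r) + \sum_{n=1}^\infty |a_n| \zeta_n(r) \le \zeta_0(r) for all r \le R_1. -/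
open Metric Complex Filter Topology intervalIntegral ComplexConjugate
open scoped Real

/-!
Carathéodory's inequality does the work. On the circle `z = r e^{iθ}` the conjugate series
`conj (f z) = ∑ conj aₖ rᵏ e^{-ikθ}` has no positive frequencies, so for `n ≥ 1` the `n`-th
Fourier coefficient of `Re f` is `aₙ rⁿ / 2`; hence `π aₙ rⁿ = -∫ (M - Re f) e^{-inθ}`. Since
`M - Re f ≥ 0`, the norm of this integral is at most `∫ (M - Re f) = 2π (M - Re a₀)`, and `r → 1`
gives `‖aₙ‖ ≤ 2 (M - Re a₀)`. With `M = 1`, Bernoulli's inequality `a₀ᵖ ≤ 1 - p (1 - a₀)` and the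
majorant `∑ ζₙ₊₁ ≤ (p/2) ζ₀` then give
`a₀ᵖ ζ₀ + ∑ ‖aₙ₊₁‖ ζₙ₊₁ ≤ (1 - p (1 - a₀)) ζ₀ + 2 (1 - a₀) (p/2) ζ₀ = ζ₀`.
-/

lemma integral_exp_int_mul_I (m : ℤ) :
    ∫ θ in (0 : ℝ)..2 * π, exp (m * θ * I) = if m = 0 then (2 * π : ℂ) else 0 := by
  split_ifs with hm
  · simp [hm]
  · have hc : (m : ℂ) * I ≠ 0 := by simp [hm]
    simp_rw [mul_right_comm _ _ I]
    rw [integral_exp_mul_complex hc]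
    push_cast
    rw [show (m : ℂ) * I * (2 * π) = m * (2 * π * I) by ring, exp_int_mul_two_pi_mul_I]
    simp

lemma norm_exp_int_mul_I (m : ℤ) (θ : ℝ) : ‖exp (m * θ * I)‖ = 1 := by
  exact_mod_cast norm_exp_ofReal_mul_I (m * θ)

lemma hasSum_integral_of_hasSum_mul_exp {b : ℕ → ℂ} {G : ℝ → ℂ} (hb : Summable fun k => ‖b k‖)
    (m : ℕ → ℤ) (hG : ∀ θ : ℝ, HasSum (fun k => b k * exp (m k * θ * I)) (G θ)) :
    HasSum (fun k => if m k = 0 then 2 * π * b k else 0) (∫ θ in (0 : ℝ)..2 * π, G θ) := by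
  have H := hasSum_integral_of_dominated_convergence (μ := MeasureTheory.volume)
    (a := 0) (b := 2 * π) (F := fun k (θ : ℝ) => b k * exp (m k * θ * I)) (fun k _ => ‖b k‖)
    (fun k => (by fun_prop : Continuous _).aestronglyMeasurable)
    (fun k => .of_forall fun θ _ => by rw [norm_mul, norm_exp_int_mul_I, mul_one])
    (.of_forall fun _ _ => hb) intervalIntegrable_const (.of_forall fun θ _ => hG θ)
  simpa only [integral_const_mul, integral_exp_int_mul_I, mul_ite, mul_zero,
    mul_comm (2 * (π : ℂ))] using H

lemma circleMap_zero_pow_mul_exp (r θ : ℝ) (k : ℕ) (m : ℤ) :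
    circleMap 0 r θ ^ k * exp (m * θ * I) = r ^ k * exp (((k + m : ℤ) : ℂ) * θ * I) := by
  rw [circleMap_zero, mul_pow, ← exp_nat_mul]
  push_cast
  rw [mul_assoc, ← exp_add]
  ring_nf

lemma conj_circleMap_zero_pow_mul_exp (r θ : ℝ) (k : ℕ) (m : ℤ) :
    conj (circleMap 0 r θ ^ k) * exp (m * θ * I) = r ^ k * exp (((m - k : ℤ) : ℂ) * θ * I) := by
  rw [circleMap_zero, map_pow, map_mul, conj_ofReal, ← exp_conj, mul_pow, ← exp_nat_mul]
  simp only [map_mul, conj_ofReal, conj_I]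
  push_cast
  rw [mul_assoc, ← exp_add]
  ring_nf

section CircleCoefficients

variable {a : ℕ → ℂ} {g : ℝ → ℂ} {r : ℝ} (habs : Summable fun k => ‖a k * r ^ k‖)
  (hg : ∀ θ, HasSum (fun k => a k * circleMap 0 r θ ^ k) (g θ))
include habs hg

lemma integral_mul_exp_neg_eq_coeff (n : ℕ) :
    ∫ θ in (0 : ℝ)..2 * π, g θ * exp (((-n : ℤ) : ℂ) * θ * I) = 2 * π * (a n * r ^ n) := by
  have H := hasSum_integral_of_hasSum_mul_exp habs (fun k => k + (-n : ℤ)) fun θ => by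
    simpa only [mul_assoc (a _), circleMap_zero_pow_mul_exp] using (hg θ).mul_right
      (exp (((-n : ℤ) : ℂ) * θ * I))
  refine H.unique ?_
  convert hasSum_single
    (f := fun k : ℕ => if (k + (-n : ℤ)) = 0 then 2 * π * (a k * r ^ k) else 0) n
    fun k hk => if_neg (by omega) using 1
  simp

lemma integral_conj_mul_exp_neg_eq_zero {n : ℕ} (hn : n ≠ 0) :
    ∫ θ in (0 : ℝ)..2 * π, conj (g θ) * exp (((-n : ℤ) : ℂ) * θ * I) = 0 := by
  have hconj : Summable fun k => ‖conj (a k) * r ^ k‖ := by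
    simpa only [norm_mul, RCLike.norm_conj] using habs
  have H := hasSum_integral_of_hasSum_mul_exp hconj (fun k => (-n : ℤ) - k) fun θ => by
    simpa only [map_mul, mul_assoc (conj (a _)), conj_circleMap_zero_pow_mul_exp] using
      (hasSum_conj'.mpr (hg θ)).mul_right (exp (((-n : ℤ) : ℂ) * θ * I))
  refine H.unique ?_
  convert hasSum_zero with k
  exact if_neg (by omega)

lemma continuous_of_hasSum_circleMap : Continuous g := by
  rw [show g = fun θ => ∑' k, a k * circleMap 0 r θ ^ k from funext fun θ => (hg θ).tsum_eq.symm]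
  refine continuous_tsum (fun k => by fun_prop) habs fun k θ => le_of_eq ?_
  simp

lemma integral_re_mul_exp_neg_eq_coeff {n : ℕ} (hn : n ≠ 0) :
    ∫ θ in (0 : ℝ)..2 * π, ((g θ).re : ℂ) * exp (((-n : ℤ) : ℂ) * θ * I) = π * (a n * r ^ n) := by
  have hgc := continuous_of_hasSum_circleMap habs hg
  have hint : ∀ G : ℝ → ℂ, Continuous G →
      IntervalIntegrable (fun θ => G θ * exp (((-n : ℤ) : ℂ) * θ * I))
        MeasureTheory.volume 0 (2 * π) :=
    fun G hG => (hG.mul (by fun_prop)).intervalIntegrable _ _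
  simp_rw [re_eq_add_conj, div_mul_eq_mul_div, add_mul]
  rw [integral_div,
    integral_add (hint _ hgc) (hint (fun θ => conj (g θ)) (continuous_conj.comp hgc)),
    integral_mul_exp_neg_eq_coeff habs hg, integral_conj_mul_exp_neg_eq_zero habs hg hn]
  ring

lemma integral_re_eq_coeff_zero :
    ∫ θ in (0 : ℝ)..2 * π, (g θ).re = 2 * π * (a 0).re := by
  have h := integral_mul_exp_neg_eq_coeff habs hg 0
  simp only [Nat.cast_zero, neg_zero, Int.cast_zero, zero_mul, exp_zero, mul_one, pow_zero] at h
  have hre := intervalIntegral_re (𝕜 := ℂ) (μ := MeasureTheory.volume)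
    ((continuous_of_hasSum_circleMap habs hg).intervalIntegrable 0 (2 * π))
  simp only [RCLike.re_to_complex] at hre
  rw [hre, h]
  simp

lemma norm_coeff_mul_pow_le_of_re_le {M : ℝ} (hM : ∀ θ, (g θ).re ≤ M) {n : ℕ} (hn : n ≠ 0) :
    ‖a n‖ * |r| ^ n ≤ 2 * (M - (a 0).re) := by
  have hgc := continuous_of_hasSum_circleMap habs hg
  have hI : ∫ θ in (0 : ℝ)..2 * π, ((M - (g θ).re : ℝ) : ℂ) * exp (((-n : ℤ) : ℂ) * θ * I)
      = -(π * (a n * r ^ n)) := by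
    simp_rw [ofReal_sub, sub_mul]
    rw [integral_sub, integral_const_mul, integral_exp_int_mul_I,
      integral_re_mul_exp_neg_eq_coeff habs hg hn]
    · simp [hn]
    all_goals exact Continuous.intervalIntegrable (by fun_prop) _ _
  have hle : ‖∫ θ in (0 : ℝ)..2 * π, ((M - (g θ).re : ℝ) : ℂ) * exp (((-n : ℤ) : ℂ) * θ * I)‖
      ≤ ∫ θ in (0 : ℝ)..2 * π, (M - (g θ).re) := by
    refine (norm_integral_le_integral_norm (by positivity)).trans_eq (integral_congr fun θ _ => ?_)
    rw [norm_mul, norm_exp_int_mul_I, mul_one, norm_real, Real.norm_of_nonneg (sub_nonneg.2 (hM θ))]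
  have hre : Continuous fun θ => (g θ).re := by fun_prop
  rw [integral_sub intervalIntegrable_const (hre.intervalIntegrable _ _), integral_const,
    integral_re_eq_coeff_zero habs hg, hI] at hle
  simp only [norm_neg, norm_mul, norm_real, Real.norm_eq_abs, norm_pow, abs_of_pos Real.pi_pos,
    sub_zero, smul_eq_mul] at hle
  exact le_of_mul_le_mul_left (by linarith) Real.pi_pos

end CircleCoefficients

lemma summable_norm_mul_pow_of_summable {a : ℕ → ℂ} {w : ℂ}
    (hs : Summable fun n => a n * w ^ n) {r : ℝ} (hr : |r| < ‖w‖) :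
    Summable fun n => ‖a n * r ^ n‖ := by
  have hw : 0 < ‖w‖ := (abs_nonneg r).trans_lt hr
  obtain ⟨C, hC⟩ := hs.tendsto_atTop_zero.norm.bddAbove_range
  refine .of_nonneg_of_le (fun _ => norm_nonneg _) (fun n => ?_)
    ((summable_geometric_of_lt_one (by positivity) ((div_lt_one hw).2 hr)).mul_left C)
  calc ‖a n * r ^ n‖ = ‖a n * w ^ n‖ * (|r| / ‖w‖) ^ n := by
        rw [norm_mul, norm_mul, norm_pow, norm_pow, norm_real, Real.norm_eq_abs, div_pow,
          mul_assoc, mul_div_cancel₀ _ (by positivity)]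
    _ ≤ C * (|r| / ‖w‖) ^ n := by gcongr; exact hC ⟨n, rfl⟩

theorem norm_coeff_le_of_re_le {f : ℂ → ℂ} {a : ℕ → ℂ}
    (hsum : ∀ z ∈ ball (0 : ℂ) 1, HasSum (fun n => a n * z ^ n) (f z)) {M : ℝ}
    (hre : ∀ z ∈ ball (0 : ℂ) 1, (f z).re ≤ M) {n : ℕ} (hn : n ≠ 0) :
    ‖a n‖ ≤ 2 * (M - (a 0).re) := by
  have hr : ∀ r ∈ Set.Ioo (0 : ℝ) 1, ‖a n‖ * |r| ^ n ≤ 2 * (M - (a 0).re) := by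
    rintro r ⟨hr0, hr1⟩
    have hcirc : ∀ θ, circleMap 0 r θ ∈ ball (0 : ℂ) 1 := fun θ => by
      simpa [abs_of_pos hr0] using hr1
    have hw : (((1 + r) / 2 : ℝ) : ℂ) ∈ ball (0 : ℂ) 1 := by
      rw [mem_ball_zero_iff, norm_real, Real.norm_of_nonneg (by linarith)]; linarith
    refine norm_coeff_mul_pow_le_of_re_le (g := fun θ => f (circleMap 0 r θ))
      (summable_norm_mul_pow_of_summable (hsum _ hw).summable ?_)
      (fun θ => hsum _ (hcirc θ)) (fun θ => hre _ (hcirc θ)) hn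
    rw [norm_real, Real.norm_of_nonneg (by linarith), abs_of_pos hr0]; linarith
  have hlim : Tendsto (fun r : ℝ => ‖a n‖ * |r| ^ n) (𝓝[<] 1) (𝓝 (‖a n‖ * |1| ^ n)) :=
    (by fun_prop : Continuous fun r : ℝ => ‖a n‖ * |r| ^ n).continuousWithinAt.tendsto
  simpa using le_of_tendsto hlim (eventually_of_mem (Ioo_mem_nhdsLT one_pos) hr)

lemma tsum_norm_mul_le_of_norm_le {E : Type*} [SeminormedAddCommGroup E] {c : ℕ → E}
    {w : ℕ → ℝ} {C : ℝ} (hw : ∀ n, 0 ≤ w n) (hws : Summable w) (hc : ∀ n, ‖c n‖ ≤ C) :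
    ∑' n, ‖c n‖ * w n ≤ C * ∑' n, w n := by
  have hle : ∀ n, ‖c n‖ * w n ≤ C * w n := fun n => mul_le_mul_of_nonneg_right (hc n) (hw n)
  rw [← tsum_mul_left]
  exact Summable.tsum_le_tsum hle
    (.of_nonneg_of_le (fun n => mul_nonneg (norm_nonneg _) (hw n)) hle (hws.mul_left C))
    (hws.mul_left C)

lemma rpow_mul_add_tsum_norm_mul_le {E : Type*} [SeminormedAddCommGroup E] {c : ℕ → E}
    {w : ℕ → ℝ} {w₀ a₀ p : ℝ} (h0 : 0 ≤ a₀) (h1 : a₀ ≤ 1) (hp0 : 0 < p) (hp1 : p ≤ 1)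
    (hw : ∀ n, 0 ≤ w n) (hws : Summable w) (hc : ∀ n, ‖c n‖ ≤ 2 * (1 - a₀))
    (hmaj : 2 / p * ∑' n, w n ≤ w₀) :
    a₀ ^ p * w₀ + ∑' n, ‖c n‖ * w n ≤ w₀ := by
  have htail : ∑' n, w n ≤ p / 2 * w₀ := by
    have := (div_le_iff₀ hp0).1 (by simpa only [div_mul_eq_mul_div] using hmaj)
    linarith
  have hw₀ : 0 ≤ w₀ := (mul_nonneg (by positivity) (tsum_nonneg hw)).trans hmaj
  calc a₀ ^ p * w₀ + ∑' n, ‖c n‖ * w n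
      ≤ (1 - p * (1 - a₀)) * w₀ + 2 * (1 - a₀) * (p / 2 * w₀) := by
        gcongr
        · have := rpow_one_add_le_one_add_mul_self (s := a₀ - 1) (by linarith) hp0.le hp1
          rw [add_sub_cancel] at this
          linarith
        · exact (tsum_norm_mul_le_of_norm_le hw hws hc).trans (by gcongr)
    _ = w₀ := by ring

theorem bohr_weighted_P_general (f : ℂ → ℂ) (a : ℕ → ℂ) (a₀ p : ℝ) (ζ : ℕ → ℝ → ℝ) (R₁ : ℝ)
    (hsum : ∀ z ∈ ball (0 : ℂ) 1, HasSum (fun n => a n * z ^ n) (f z))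
    (hre : ∀ z ∈ ball (0 : ℂ) 1, (f z).re < 1)
    (ha0 : a 0 = (a₀ : ℂ)) (h0 : 0 ≤ a₀) (h1 : a₀ < 1)
    (hp0 : 0 < p) (hp1 : p ≤ 1)
    (hζnn : ∀ n, ∀ r ∈ Set.Ico (0 : ℝ) 1, 0 ≤ ζ n r)
    (hζs : ∀ r ∈ Set.Ico (0 : ℝ) 1, Summable fun n => ζ n r)
    (hR : R₁ ∈ Set.Ico (0 : ℝ) 1)
    (hmaj : ∀ r ∈ Set.Icc (0 : ℝ) R₁, (2 / p) * ∑' n : ℕ, ζ (n + 1) r ≤ ζ 0 r) :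
    ∀ r ∈ Set.Icc (0 : ℝ) R₁,
      a₀ ^ p * ζ 0 r + ∑' n : ℕ, ‖a (n + 1)‖ * ζ (n + 1) r ≤ ζ 0 r := by
  intro r hr
  have hr' : r ∈ Set.Ico (0 : ℝ) 1 := ⟨hr.1, hr.2.trans_lt hR.2⟩
  have hcoeff : ∀ n, ‖a (n + 1)‖ ≤ 2 * (1 - a₀) := fun n => by
    simpa [ha0] using norm_coeff_le_of_re_le hsum (fun z hz => (hre z hz).le) n.succ_ne_zero
  exact rpow_mul_add_tsum_norm_mul_le h0 h1.le hp0 hp1 (fun n => hζnn _ r hr')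
    ((hζs r hr').comp_injective (add_left_injective 1)) hcoeff (hmaj r hr)

/-- Theorem 1(i): weighted Bohr inequality for `Re f < 1`, `p ∈ (0,1]`. -/
theorem bohr_weighted_P (f : ℂ → ℂ) (a : ℕ → ℂ) (a₀ p : ℝ) (ζ : ℕ → ℝ → ℝ) (R₁ : ℝ)
    (hsum : ∀ z ∈ ball (0 : ℂ) 1, HasSum (fun n => a n * z ^ n) (f z))
    (hre : ∀ z ∈ ball (0 : ℂ) 1, (f z).re < 1)
    (ha0 : a 0 = (a₀ : ℂ)) (h0 : 0 ≤ a₀) (h1 : a₀ < 1)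
    (hp0 : 0 < p) (hp1 : p ≤ 1)
    (hζnn : ∀ n, ∀ r ∈ Set.Ico (0 : ℝ) 1, 0 ≤ ζ n r)
    (hζc : ∀ n, ContinuousOn (ζ n) (Set.Ico 0 1))
    (hζs : ∀ r ∈ Set.Ico (0 : ℝ) 1, Summable fun n => ζ n r)
    (hR : R₁ ∈ Set.Ico (0 : ℝ) 1)
    (hmaj : ∀ r ∈ Set.Icc (0 : ℝ) R₁, (2 / p) * ∑' n : ℕ, ζ (n + 1) r ≤ ζ 0 r) :
    ∀ r ∈ Set.Icc (0 : ℝ) R₁,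
      a₀ ^ p * ζ 0 r + ∑' n : ℕ, ‖a (n + 1)‖ * ζ (n + 1) r ≤ ζ 0 r :=
  bohr_weighted_P_general f a a₀ p ζ R₁ hsum hre ha0 h0 h1 hp0 hp1 hζnn hζs hR hmaj
end

section
/- If f is analytic on the unit disk with Re f(z) < 1 and a_0 = f(0) \in [0,1), then a_0^2 + \sum_{n=1}^\infty |a_n| r^n \le 1 for all r \le (1+a_0)/(3+a_0). -/
/-! On the circle `|z| = ρ < 1` the `n`-th Fourier coefficient (`n ≥ 1`) of `Re f - 1` is
`aₙ ρⁿ / 2`, while `Re f - 1 ≤ 0` has mean `a₀ - 1`; hence `|aₙ| ρⁿ ≤ 2 (1 - a₀)`, and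
letting `ρ → 1` gives `|aₙ| ≤ 2 (1 - a₀)`. Summing the geometric series,
`∑ₙ≥₁ |aₙ| rⁿ ≤ 2 (1 - a₀) r / (1 - r)`, which is at most `1 - a₀²` exactly when
`r ≤ (1 + a₀) / (3 + a₀)`. -/

open Metric MeasureTheory Complex
open scoped Real ComplexConjugate

theorem integral_exp_int_mul_mul_I (j : ℤ) :
    ∫ θ in (0 : ℝ)..2 * π, exp (j * θ * I) = (if j = 0 then 2 * π else 0 : ℂ) := by
  split_ifs with hj
  · simp [hj]
  · have hc : (j : ℂ) * I ≠ 0 := mul_ne_zero (by exact_mod_cast hj) I_ne_zero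
    have hperiod : exp (j * I * (2 * π : ℝ)) = 1 := by
      rw [← exp_int_mul_two_pi_mul_I j]; push_cast; ring_nf
    simp_rw [mul_right_comm _ _ I]
    rw [integral_exp_mul_complex hc, hperiod]
    simp

section PowerSeriesOnCircle

variable {a : ℕ → ℂ} {ρ : ℝ} {g : ℝ → ℂ}

theorem summable_norm_mul_abs_pow
    (hg : ∀ θ, HasSum (fun m => a m * circleMap 0 ρ θ ^ m) (g θ)) :
    Summable fun m => ‖a m‖ * |ρ| ^ m := by
  simpa [norm_circleMap_zero] using summable_norm_iff.mpr (hg 0).summable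

theorem continuous_of_hasSum_circleMap_s8
    (hg : ∀ θ, HasSum (fun m => a m * circleMap 0 ρ θ ^ m) (g θ)) : Continuous g := by
  rw [show g = fun θ => ∑' m, a m * circleMap 0 ρ θ ^ m from
    funext fun θ => (hg θ).tsum_eq.symm]
  exact continuous_tsum (fun m => by fun_prop) (summable_norm_mul_abs_pow hg)
    fun m θ => by simp [norm_circleMap_zero]

theorem hasSum_integral_mul_exp
    (hg : ∀ θ, HasSum (fun m => a m * circleMap 0 ρ θ ^ m) (g θ)) (k : ℤ) :
    HasSum (fun m : ℕ => if (m : ℤ) + k = 0 then 2 * π * (a m * ρ ^ m) else 0)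
      (∫ θ in (0 : ℝ)..2 * π, g θ * exp (k * θ * I)) := by
  have hterm : ∀ (m : ℕ) (θ : ℝ), a m * circleMap 0 ρ θ ^ m * exp (k * θ * I) =
      a m * ρ ^ m * exp (((m + k : ℤ) : ℂ) * θ * I) := fun m θ => by
    rw [circleMap_zero, mul_pow, ← exp_nat_mul, mul_assoc, mul_assoc, ← exp_add]
    push_cast; ring_nf
  have hdom := intervalIntegral.hasSum_integral_of_dominated_convergence
    (F := fun m θ => a m * circleMap 0 ρ θ ^ m * exp (k * θ * I)) (μ := volume)
    (a := 0) (b := 2 * π) (f := fun θ => g θ * exp (k * θ * I))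
    (fun m _ => ‖a m‖ * |ρ| ^ m) (fun m => (by fun_prop : Continuous _).aestronglyMeasurable)
    (fun m => .of_forall fun θ _ => by simp [norm_circleMap_zero, norm_exp])
    (.of_forall fun _ _ => summable_norm_mul_abs_pow hg) intervalIntegrable_const
    (.of_forall fun θ _ => (hg θ).mul_right _)
  have hint : ∀ m : ℕ,
      ∫ θ in (0 : ℝ)..2 * π, a m * circleMap 0 ρ θ ^ m * exp (k * θ * I) =
      (if (m : ℤ) + k = 0 then 2 * π * (a m * ρ ^ m) else 0 : ℂ) := fun m => by
    simp_rw [hterm, intervalIntegral.integral_const_mul, integral_exp_int_mul_mul_I]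
    split_ifs <;> ring
  simpa only [hint] using hdom

theorem integral_mul_exp_neg_nat_mul
    (hg : ∀ θ, HasSum (fun m => a m * circleMap 0 ρ θ ^ m) (g θ)) (n : ℕ) :
    ∫ θ in (0 : ℝ)..2 * π, g θ * exp (-(n * θ * I)) = 2 * π * (a n * ρ ^ n) := by
  have h := hasSum_integral_mul_exp hg (-n)
  simp only [Int.cast_neg, Int.cast_natCast, neg_mul, add_neg_eq_zero, Nat.cast_inj] at h
  simpa using h.unique (hasSum_single n fun m hm => if_neg hm)

theorem integral_mul_exp_nat_mul
    (hg : ∀ θ, HasSum (fun m => a m * circleMap 0 ρ θ ^ m) (g θ)) {n : ℕ} (hn : n ≠ 0) :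
    ∫ θ in (0 : ℝ)..2 * π, g θ * exp (n * θ * I) = 0 := by
  have h := hasSum_integral_mul_exp hg n
  simp only [Int.cast_natCast] at h
  refine h.unique ?_
  convert hasSum_zero with m
  rw [if_neg (by omega)]

theorem integral_re_mul_exp_neg_nat_mul
    (hg : ∀ θ, HasSum (fun m => a m * circleMap 0 ρ θ ^ m) (g θ)) {n : ℕ} (hn : n ≠ 0) :
    ∫ θ in (0 : ℝ)..2 * π, ((g θ).re : ℂ) * exp (-(n * θ * I)) = π * (a n * ρ ^ n) := by
  have hcont := continuous_of_hasSum_circleMap_s8 hg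
  have hsplit : ∀ θ : ℝ, ((g θ).re : ℂ) * exp (-(n * θ * I)) =
      (g θ * exp (-(n * θ * I)) + conj (g θ * exp (n * θ * I))) / 2 := fun θ => by
    rw [re_eq_add_conj, map_mul, ← exp_conj]
    simp only [map_mul, conj_natCast, conj_ofReal, conj_I]
    ring_nf
  simp_rw [hsplit]
  rw [intervalIntegral.integral_div, intervalIntegral.integral_add,
    intervalIntegral.intervalIntegral_conj, integral_mul_exp_neg_nat_mul hg,
    integral_mul_exp_nat_mul hg hn, map_zero]
  · ring
  all_goals exact Continuous.intervalIntegrable (by fun_prop) _ _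

theorem integral_re_eq_two_pi_mul_re
    (hg : ∀ θ, HasSum (fun m => a m * circleMap 0 ρ θ ^ m) (g θ)) :
    ∫ θ in (0 : ℝ)..2 * π, (g θ).re = 2 * π * (a 0).re := by
  have h := integral_mul_exp_neg_nat_mul hg 0
  simp only [Nat.cast_zero, zero_mul, neg_zero, exp_zero, mul_one, pow_zero] at h
  have hre := reCLM.intervalIntegral_comp_comm
    ((continuous_of_hasSum_circleMap_s8 hg).intervalIntegrable (μ := volume) 0 (2 * π))
  simp only [reCLM_apply] at hre
  rw [hre, h]
  simp

theorem norm_mul_abs_pow_le_of_re_le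
    (hg : ∀ θ, HasSum (fun m => a m * circleMap 0 ρ θ ^ m) (g θ)) {M : ℝ}
    (hM : ∀ θ, (g θ).re ≤ M) {n : ℕ} (hn : n ≠ 0) :
    ‖a n‖ * |ρ| ^ n ≤ 2 * (M - (a 0).re) := by
  have hcont := continuous_of_hasSum_circleMap_s8 hg
  have hmean : ∫ θ in (0 : ℝ)..2 * π, exp (-(n * θ * I)) = 0 := by
    simpa [hn, neg_mul] using integral_exp_int_mul_mul_I (-n)
  have hcoeff : ∫ θ in (0 : ℝ)..2 * π, (((g θ).re : ℂ) - M) * exp (-(n * θ * I)) =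
      π * (a n * ρ ^ n) := by
    simp_rw [sub_mul]
    rw [intervalIntegral.integral_sub, intervalIntegral.integral_const_mul, hmean,
      integral_re_mul_exp_neg_nat_mul hg hn, mul_zero, sub_zero]
    all_goals exact Continuous.intervalIntegrable (by fun_prop) _ _
  have hle : π * (‖a n‖ * |ρ| ^ n) ≤ ∫ θ in (0 : ℝ)..2 * π, (M - (g θ).re) :=
    calc π * (‖a n‖ * |ρ| ^ n)
        = ‖∫ θ in (0 : ℝ)..2 * π, (((g θ).re : ℂ) - M) * exp (-(n * θ * I))‖ := by
          rw [hcoeff]; simp [abs_of_pos Real.pi_pos]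
      _ ≤ ∫ θ in (0 : ℝ)..2 * π, ‖(((g θ).re : ℂ) - M) * exp (-(n * θ * I))‖ :=
          intervalIntegral.norm_integral_le_integral_norm Real.two_pi_pos.le
      _ = ∫ θ in (0 : ℝ)..2 * π, (M - (g θ).re) := by
          refine intervalIntegral.integral_congr fun θ _ => ?_
          rw [norm_mul, ← ofReal_sub, norm_real, Real.norm_eq_abs, abs_sub_comm,
            abs_of_nonneg (sub_nonneg.mpr (hM θ)), norm_exp]
          simp
  rw [intervalIntegral.integral_sub intervalIntegrable_const
    ((by fun_prop : Continuous fun θ => (g θ).re).intervalIntegrable _ _),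
    integral_re_eq_two_pi_mul_re hg, intervalIntegral.integral_const] at hle
  simp only [sub_zero, smul_eq_mul] at hle
  nlinarith [Real.pi_pos]

end PowerSeriesOnCircle

theorem norm_mul_pow_le_of_re_le {f : ℂ → ℂ} {a : ℕ → ℂ} {R M : ℝ} (hR : 0 < R)
    (hsum : ∀ z ∈ ball (0 : ℂ) R, HasSum (fun n => a n * z ^ n) (f z))
    (hre : ∀ z ∈ ball (0 : ℂ) R, (f z).re ≤ M) {n : ℕ} (hn : n ≠ 0) :
    ‖a n‖ * R ^ n ≤ 2 * (M - (a 0).re) := by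
  have hinner : ∀ ρ ∈ Set.Ico 0 R, ‖a n‖ * ρ ^ n ≤ 2 * (M - (a 0).re) := by
    rintro ρ ⟨hρ0, hρR⟩
    have hmem : ∀ θ, circleMap 0 ρ θ ∈ ball (0 : ℂ) R := fun θ => by
      simpa [norm_circleMap_zero, abs_of_nonneg hρ0] using hρR
    simpa [abs_of_nonneg hρ0] using norm_mul_abs_pow_le_of_re_le
      (fun θ => hsum _ (hmem θ)) (fun θ => hre _ (hmem θ)) hn
  have hclosed : IsClosed {ρ : ℝ | ‖a n‖ * ρ ^ n ≤ 2 * (M - (a 0).re)} :=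
    isClosed_le (by fun_prop) continuous_const
  exact hclosed.closure_subset_iff.mpr hinner
    (by rw [closure_Ico hR.ne]; exact ⟨hR.le, le_rfl⟩)

theorem tsum_mul_pow_succ_le {b : ℕ → ℝ} {C r : ℝ} (hb : ∀ n, 0 ≤ b n) (hbC : ∀ n, b n ≤ C)
    (hr0 : 0 ≤ r) (hr1 : r < 1) :
    ∑' n, b n * r ^ (n + 1) ≤ C * r * (1 - r)⁻¹ := by
  have hgeom := (hasSum_geometric_of_lt_one hr0 hr1).mul_left (C * r)
  have hle : ∀ n, b n * r ^ (n + 1) ≤ C * r * r ^ n := fun n => by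
    rw [pow_succ']
    nlinarith [hbC n, pow_nonneg hr0 n, mul_nonneg hr0 (pow_nonneg hr0 n)]
  have hsummable := Summable.of_nonneg_of_le (fun n => mul_nonneg (hb n) (pow_nonneg hr0 _))
    hle hgeom.summable
  exact hasSum_le hle hsummable.hasSum hgeom

/-- If `Re f < 1` and `a₀ = f(0) ∈ [0,1)`, then
`a₀² + ∑_{n≥1} |aₙ| rⁿ ≤ 1` for `r ≤ (1+a₀)/(3+a₀)`. -/
theorem bohr_P_pow_two (f : ℂ → ℂ) (a : ℕ → ℂ) (a₀ : ℝ)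
    (hsum : ∀ z ∈ ball (0 : ℂ) 1, HasSum (fun n => a n * z ^ n) (f z))
    (hre : ∀ z ∈ ball (0 : ℂ) 1, (f z).re < 1)
    (ha0 : a 0 = (a₀ : ℂ)) (h0 : 0 ≤ a₀) (h1 : a₀ < 1)
    (r : ℝ) (hr0 : 0 ≤ r) (hr : r ≤ (1 + a₀) / (3 + a₀)) :
    a₀ ^ 2 + ∑' n : ℕ, ‖a (n + 1)‖ * r ^ (n + 1) ≤ 1 := by
  have h3 : 0 < 3 + a₀ := by linarith
  have hr' : r * (3 + a₀) ≤ 1 + a₀ := (le_div_iff₀ h3).mp hr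
  have hr1 : r < 1 := by nlinarith
  have hcoeff : ∀ n, ‖a (n + 1)‖ ≤ 2 * (1 - a₀) := fun n => by
    simpa [ha0] using norm_mul_pow_le_of_re_le one_pos hsum (fun z hz => (hre z hz).le)
      n.succ_ne_zero
  have hbound : 2 * (1 - a₀) * r * (1 - r)⁻¹ ≤ 1 - a₀ ^ 2 := by
    rw [← div_eq_mul_inv, div_le_iff₀ (by linarith)]
    nlinarith
  linarith [tsum_mul_pow_succ_le (fun n => norm_nonneg _) hcoeff hr0 hr1]
end

section
/- If f is analytic on the unit disk with Re f(z) < 1, a_0 = f(0) \in [0,1), p \in (0,1], and k \ge 1 a fixed natural number, then a_0^p + \sum_{m=1}^\infty |a_{km}| r^{km} \le 1 for all r \le (p/(2+p))^{1/k}. -/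
open Metric

namespace BohrAux

open Complex intervalIntegral Real Filter

lemma summable_aux {a : ℕ → ℂ} {f : ℂ → ℂ}
    (hsum : ∀ z ∈ ball (0 : ℂ) 1, HasSum (fun n => a n * z ^ n) (f z))
    {r : ℝ} (hr0 : 0 ≤ r) (hr1 : r < 1) :
    Summable (fun m => ‖a m‖ * r ^ m) := by
  set s : ℝ := (1 + r) / 2 with hs
  have hs0 : 0 < s := by simp only [hs]; linarith
  have hs1 : s < 1 := by simp only [hs]; linarith
  have hrs : r < s := by simp only [hs]; linarith
  have hz : (s : ℂ) ∈ ball (0 : ℂ) 1 := by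
    simp [Complex.norm_real, Real.norm_eq_abs, abs_of_pos hs0, hs1]
  have h := (hsum _ hz).summable
  have ht : Filter.Tendsto (fun m => ‖a m * (s : ℂ) ^ m‖) Filter.atTop (nhds 0) := by
    simpa using h.tendsto_atTop_zero.norm
  obtain ⟨C, hC⟩ := ht.bddAbove_range
  have hC' : ∀ m, ‖a m‖ * s ^ m ≤ C := by
    intro m
    have := hC (Set.mem_range_self m)
    simpa [norm_mul, norm_pow, Complex.norm_real, Real.norm_eq_abs,
      abs_of_pos hs0] using this
  have hgeo : Summable (fun m : ℕ => C * (r / s) ^ m) :=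
    (summable_geometric_of_lt_one (by positivity) (by rw [div_lt_one hs0]; exact hrs)).mul_left C
  refine Summable.of_nonneg_of_le (fun m => by positivity) (fun m => ?_) hgeo
  have : ‖a m‖ * r ^ m = (‖a m‖ * s ^ m) * (r / s) ^ m := by
    rw [div_pow r s m, mul_assoc, mul_div_cancel₀ _ (pow_ne_zero m hs0.ne')]
  rw [this]
  exact mul_le_mul_of_nonneg_right (hC' m) (by positivity)

lemma term_int {α : ℂ} {r : ℝ} (m : ℕ) (c : ℤ) :
    (∫ θ in (0:ℝ)..(2*π), α * ((r:ℂ) * Complex.exp (θ * Complex.I)) ^ m *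
        Complex.exp ((c:ℂ) * θ * Complex.I))
      = if (m : ℤ) + c = 0 then (2*π : ℝ) * α * r ^ m else 0 := by
  have hterm : ∀ θ : ℝ, α * ((r:ℂ) * Complex.exp (θ * Complex.I)) ^ m *
      Complex.exp ((c:ℂ) * θ * Complex.I)
      = (α * (r:ℂ) ^ m) * Complex.exp ((((m:ℤ) + c : ℤ) : ℂ) * Complex.I * θ) := by
    intro θ
    rw [mul_pow, ← Complex.exp_nat_mul, mul_assoc α, mul_assoc,
      mul_assoc, ← Complex.exp_add]
    push_cast
    ring_nf
  simp only [hterm]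
  rw [intervalIntegral.integral_const_mul]
  by_cases h : (m : ℤ) + c = 0
  · simp only [h, if_pos]
    simp [Complex.ofReal_mul]
    ring
  · have hc : ((((m:ℤ) + c : ℤ)) : ℂ) * Complex.I ≠ 0 := by
      simp [Complex.ext_iff]
      exact_mod_cast h
    rw [integral_exp_mul_complex hc]
    have h1 : Complex.exp (((((m:ℤ) + c : ℤ)) : ℂ) * Complex.I * ((2:ℝ)*π)) = 1 := by
      rw [show (((((m:ℤ) + c : ℤ)) : ℂ) * Complex.I * ((2:ℝ)*π))
          = (((m:ℤ) + c : ℤ) : ℂ) * (2 * (π:ℂ) * Complex.I) by push_cast; ring]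
      exact Complex.exp_int_mul_two_pi_mul_I _
    rw [if_neg h]
    push_cast at h1 ⊢
    rw [h1]
    simp

lemma exp_int (c : ℤ) :
    (∫ θ in (0:ℝ)..(2*π), Complex.exp ((c:ℂ) * θ * Complex.I))
      = if c = 0 then ((2*π : ℝ) : ℂ) else 0 := by
  have := term_int (α := (1:ℂ)) (r := (0:ℝ)) 0 c
  simpa using this

lemma hasSum_int {a : ℕ → ℂ} {f : ℂ → ℂ} {r : ℝ}
    (hsum : ∀ z ∈ ball (0 : ℂ) 1, HasSum (fun n => a n * z ^ n) (f z))
    (hr0 : 0 ≤ r) (hr1 : r < 1) (c : ℤ) :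
    HasSum (fun m : ℕ => ∫ θ in (0:ℝ)..(2*π), a m * ((r:ℂ) * Complex.exp (θ * Complex.I)) ^ m *
        Complex.exp ((c:ℂ) * θ * Complex.I))
      (∫ θ in (0:ℝ)..(2*π), f ((r:ℂ) * Complex.exp (θ * Complex.I)) *
        Complex.exp ((c:ℂ) * θ * Complex.I)) := by
  have hsummable := summable_aux hsum hr0 hr1
  have hmem : ∀ θ : ℝ, (r:ℂ) * Complex.exp (θ * Complex.I) ∈ ball (0:ℂ) 1 := by
    intro θ
    simp [Complex.norm_exp, _root_.abs_of_nonneg hr0, hr1]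
  have hcont : ∀ m : ℕ, Continuous (fun θ : ℝ => a m * ((r:ℂ) * Complex.exp (θ * Complex.I)) ^ m *
      Complex.exp ((c:ℂ) * θ * Complex.I)) := by
    intro m
    fun_prop
  set F : ℕ → C(ℝ, ℂ) := fun m => ⟨_, hcont m⟩ with hF
  have hnorm : ∀ (m : ℕ) (θ : ℝ), ‖F m θ‖ ≤ ‖a m‖ * r ^ m := by
    intro m θ
    have e1 : ‖Complex.exp ((θ:ℂ) * Complex.I)‖ = 1 :=
      Complex.norm_exp_ofReal_mul_I θ
    have e2 : ‖Complex.exp ((c:ℂ) * (θ:ℂ) * Complex.I)‖ = 1 := by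
      rw [show ((c:ℂ) * (θ:ℂ) * Complex.I) = (((c * θ : ℝ)):ℂ) * Complex.I by push_cast; ring]
      exact Complex.norm_exp_ofReal_mul_I _
    simp only [hF, ContinuousMap.coe_mk, norm_mul, norm_pow, e1, e2,
      Complex.norm_real, Real.norm_eq_abs, _root_.abs_of_nonneg hr0]
    rw [mul_one, mul_one]
  have hFs : Summable fun m : ℕ =>
      ‖(F m).restrict (⟨Set.uIcc (0:ℝ) (2*π), isCompact_uIcc⟩ : TopologicalSpace.Compacts ℝ)‖ := by
    refine Summable.of_nonneg_of_le (fun m => norm_nonneg _) (fun m => ?_) hsummable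
    rw [ContinuousMap.norm_le _ (by positivity)]
    rintro ⟨x, hx⟩
    exact hnorm m x
  have h := hasSum_intervalIntegral_of_summable_norm (a := (0:ℝ)) (b := 2*π) hFs
  have heq : ∀ θ : ℝ, (∑' m : ℕ, F m θ)
      = f ((r:ℂ) * Complex.exp (θ * Complex.I)) * Complex.exp ((c:ℂ) * θ * Complex.I) := by
    intro θ
    exact ((hsum _ (hmem θ)).mul_right _).tsum_eq
  rw [intervalIntegral.integral_congr (g :=
    fun θ => f ((r:ℂ) * Complex.exp (θ * Complex.I)) * Complex.exp ((c:ℂ) * θ * Complex.I))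
    (fun θ _ => heq θ)] at h
  exact h

lemma int_f {a : ℕ → ℂ} {f : ℂ → ℂ} {r : ℝ}
    (hsum : ∀ z ∈ ball (0 : ℂ) 1, HasSum (fun n => a n * z ^ n) (f z))
    (hr0 : 0 ≤ r) (hr1 : r < 1) (c : ℤ) :
    (∫ θ in (0:ℝ)..(2*π), f ((r:ℂ) * Complex.exp (θ * Complex.I)) *
        Complex.exp ((c:ℂ) * θ * Complex.I))
      = if 0 ≤ -c then (2*π : ℝ) * a (-c).toNat * r ^ (-c).toNat else 0 := by
  have h := hasSum_int hsum hr0 hr1 c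
  have hterm : (fun m : ℕ => ∫ θ in (0:ℝ)..(2*π),
      a m * ((r:ℂ) * Complex.exp (θ * Complex.I)) ^ m * Complex.exp ((c:ℂ) * θ * Complex.I))
      = fun m : ℕ => if m = (-c).toNat ∧ 0 ≤ -c then
          (2*π : ℝ) * a (-c).toNat * r ^ (-c).toNat else 0 := by
    funext m
    rw [term_int]
    by_cases hm : (m : ℤ) + c = 0
    · have h1 : 0 ≤ -c := by omega
      have h2 : m = (-c).toNat := by omega
      rw [if_pos hm, if_pos ⟨h2, h1⟩, h2]
    · rw [if_neg hm, if_neg]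
      rintro ⟨h2, h1⟩
      omega
  rw [hterm] at h
  by_cases hc : 0 ≤ -c
  · simp only [hc, and_true] at h
    rw [if_pos hc]
    exact h.unique (hasSum_ite_eq _ _)
  · simp only [hc, and_false, if_false] at h
    rw [if_neg hc]
    exact h.unique hasSum_zero

set_option maxHeartbeats 1000000 in
theorem coeff_r {a : ℕ → ℂ} {f : ℂ → ℂ} {a₀ : ℝ}
    (hsum : ∀ z ∈ ball (0 : ℂ) 1, HasSum (fun n => a n * z ^ n) (f z))
    (hre : ∀ z ∈ ball (0 : ℂ) 1, (f z).re < 1)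
    (ha0 : a 0 = (a₀ : ℝ)) {r : ℝ} (hr0 : 0 ≤ r) (hr1 : r < 1)
    {n : ℕ} (hn : 1 ≤ n) :
    ‖a n‖ * r ^ n ≤ 2 * (1 - a₀) := by
  have h2π : (0:ℝ) ≤ 2*π := by positivity
  set g : ℝ → ℂ := fun θ => f ((r:ℂ) * Complex.exp (θ * Complex.I)) with hg
  set E : ℝ → ℂ := fun θ => Complex.exp (-(n:ℂ) * θ * Complex.I) with hE
  have hmem : ∀ θ : ℝ, (r:ℂ) * Complex.exp (θ * Complex.I) ∈ ball (0:ℂ) 1 := by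
    intro θ
    simp [Complex.norm_exp, _root_.abs_of_nonneg hr0, hr1]
  -- continuity of g
  have hgcont : Continuous g := by
    have hgt : g = fun θ : ℝ => ∑' m, a m * ((r:ℂ) * Complex.exp ((θ:ℂ) * Complex.I)) ^ m :=
      funext fun θ => ((hsum _ (hmem θ)).tsum_eq).symm
    rw [hgt]
    refine continuous_tsum (fun m => by fun_prop) (summable_aux hsum hr0 hr1) (fun m θ => ?_)
    simp only [norm_mul, norm_pow, Complex.norm_real, Real.norm_eq_abs,
      _root_.abs_of_nonneg hr0, Complex.norm_exp_ofReal_mul_I, mul_one]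
    exact le_rfl
  have hEcont : Continuous E := by fun_prop
  -- integrability
  have i1 : IntervalIntegrable E MeasureTheory.volume 0 (2*π) := hEcont.intervalIntegrable _ _
  have i2 : IntervalIntegrable (fun θ => g θ * E θ) MeasureTheory.volume 0 (2*π) :=
    (hgcont.mul hEcont).intervalIntegrable _ _
  have hconjg : Continuous (fun θ => (starRingEnd ℂ) (g θ)) :=
    Complex.continuous_conj.comp hgcont
  have i3 : IntervalIntegrable (fun θ => (starRingEnd ℂ) (g θ) * E θ)
      MeasureTheory.volume 0 (2*π) := (hconjg.mul hEcont).intervalIntegrable _ _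
  -- integral values
  have hIg : (∫ θ in (0:ℝ)..(2*π), g θ * E θ) = 2 * (π:ℂ) * a n * (r:ℂ) ^ n := by
    have h := int_f hsum hr0 hr1 (-(n:ℤ))
    simp only [neg_neg, Int.toNat_natCast] at h
    rw [if_pos (Int.natCast_nonneg n)] at h
    push_cast at h
    exact h
  have hIE : (∫ θ in (0:ℝ)..(2*π), E θ) = 0 := by
    have h := exp_int (-(n:ℤ))
    rw [if_neg (by omega)] at h
    push_cast at h
    exact h
  have hIconj : (∫ θ in (0:ℝ)..(2*π), (starRingEnd ℂ) (g θ) * E θ) = 0 := by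
    have hpt : ∀ θ : ℝ, (starRingEnd ℂ) (g θ) * E θ
        = (starRingEnd ℂ) (g θ * Complex.exp ((n:ℂ) * θ * Complex.I)) := by
      intro θ
      rw [map_mul]
      congr 1
      rw [← Complex.exp_conj]
      simp only [map_mul, Complex.conj_I, Complex.conj_ofReal, Complex.conj_natCast]
      rw [hE]
      ring_nf
    rw [intervalIntegral.integral_congr (g := fun θ =>
      (starRingEnd ℂ) (g θ * Complex.exp ((n:ℂ) * θ * Complex.I))) (fun θ _ => hpt θ)]
    rw [intervalIntegral.integral_of_le h2π, integral_conj, ← intervalIntegral.integral_of_le h2π]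
    have h := int_f hsum hr0 hr1 ((n:ℤ))
    rw [if_neg (by omega)] at h
    push_cast at h
    rw [h, map_zero]
  -- K
  have hpt2 : ∀ θ : ℝ, (((1:ℝ) - (g θ).re : ℝ) : ℂ) * E θ
      = E θ - (g θ * E θ) / 2 - ((starRingEnd ℂ) (g θ) * E θ) / 2 := by
    intro θ
    have h3 : ((g θ).re : ℂ) = (g θ + (starRingEnd ℂ) (g θ)) / 2 := by
      rw [Complex.add_conj]
      push_cast
      ring
    push_cast
    rw [h3]
    ring
  have hK : (∫ θ in (0:ℝ)..(2*π), (((1:ℝ) - (g θ).re : ℝ) : ℂ) * E θ)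
      = -((π : ℝ) : ℂ) * (a n * r ^ n) := by
    rw [intervalIntegral.integral_congr (g := fun θ => E θ - (g θ * E θ) / 2
      - ((starRingEnd ℂ) (g θ) * E θ) / 2) (fun θ _ => hpt2 θ)]
    rw [intervalIntegral.integral_sub (i1.sub (i2.div_const 2)) (i3.div_const 2),
      intervalIntegral.integral_sub i1 (i2.div_const 2),
      intervalIntegral.integral_div, intervalIntegral.integral_div, hIg, hIE, hIconj]
    push_cast
    ring
  -- bound |K|
  have habs : ‖∫ θ in (0:ℝ)..(2*π), (((1:ℝ) - (g θ).re : ℝ) : ℂ) * E θ‖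
      ≤ ∫ θ in (0:ℝ)..(2*π), (1 - (g θ).re) := by
    refine (intervalIntegral.norm_integral_le_integral_norm h2π).trans_eq ?_
    refine intervalIntegral.integral_congr (fun θ _ => ?_)
    have h1 : (g θ).re < 1 := hre _ (hmem θ)
    have hEabs : ‖E θ‖ = 1 := by
      simp only [hE]
      rw [show (-(n:ℂ) * θ * Complex.I) = (((-(n:ℝ) * θ : ℝ)):ℂ) * Complex.I
        by push_cast; ring]
      exact Complex.norm_exp_ofReal_mul_I _
    simp only [norm_mul, hEabs, mul_one, Complex.norm_real, Real.norm_eq_abs]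
    rw [_root_.abs_of_nonneg (by linarith)]
  -- value of ∫ (1 - re g)
  have hIr : (∫ θ in (0:ℝ)..(2*π), (1 - (g θ).re)) = 2*π * (1 - a₀) := by
    have hpt3 : ∀ θ : ℝ, (((1:ℝ) - (g θ).re : ℝ) : ℂ)
        = 1 - (g θ) / 2 - ((starRingEnd ℂ) (g θ)) / 2 := by
      intro θ
      have h3 : ((g θ).re : ℂ) = (g θ + (starRingEnd ℂ) (g θ)) / 2 := by
        rw [Complex.add_conj]; push_cast; ring
      push_cast
      rw [h3]; ring
    have hg0 : (∫ θ in (0:ℝ)..(2*π), g θ) = 2 * (π:ℂ) * a 0 := by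
      have h := int_f hsum hr0 hr1 0
      rw [if_pos (by omega)] at h
      simp only [neg_zero, Int.toNat_zero, pow_zero, mul_one, Int.cast_zero, zero_mul,
        Complex.exp_zero] at h
      push_cast at h
      rw [← h]
    have hcg0 : (∫ θ in (0:ℝ)..(2*π), (starRingEnd ℂ) (g θ)) = 2 * (π:ℂ) * a 0 := by
      rw [intervalIntegral.integral_of_le h2π, integral_conj,
        ← intervalIntegral.integral_of_le h2π, hg0, ha0]
      simp only [map_mul, Complex.conj_ofReal, map_ofNat]
    have ig : IntervalIntegrable g MeasureTheory.volume 0 (2*π) :=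
      hgcont.intervalIntegrable _ _
    have icg : IntervalIntegrable (fun θ => (starRingEnd ℂ) (g θ))
        MeasureTheory.volume 0 (2*π) := hconjg.intervalIntegrable _ _
    have hL : (∫ θ in (0:ℝ)..(2*π), (((1:ℝ) - (g θ).re : ℝ) : ℂ))
        = 2 * (π:ℂ) * ((1:ℝ) - a₀) := by
      rw [intervalIntegral.integral_congr (g := fun θ => 1 - (g θ) / 2
        - ((starRingEnd ℂ) (g θ)) / 2) (fun θ _ => hpt3 θ)]
      rw [intervalIntegral.integral_sub (intervalIntegrable_const.sub (ig.div_const 2))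
        (icg.div_const 2), intervalIntegral.integral_sub intervalIntegrable_const
        (ig.div_const 2), intervalIntegral.integral_div, intervalIntegral.integral_div,
        hg0, hcg0, intervalIntegral.integral_const, ha0]
      push_cast [Complex.real_smul]
      ring
    have h4 := intervalIntegral.integral_ofReal
      (a := (0:ℝ)) (b := 2*π) (μ := MeasureTheory.volume) (f := fun θ => (1:ℝ) - (g θ).re)
    rw [hL] at h4
    have h5 := congrArg Complex.re h4.symm
    simpa using h5
  -- combine
  have hfin : ‖-((π : ℝ) : ℂ) * (a n * r ^ n)‖ ≤ 2*π * (1 - a₀) := by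
    rw [← hK]
    exact habs.trans_eq hIr
  rw [norm_mul, norm_mul, norm_neg, Complex.norm_real, Real.norm_eq_abs, _root_.abs_of_pos Real.pi_pos,
    norm_pow, Complex.norm_real, Real.norm_eq_abs, _root_.abs_of_nonneg hr0] at hfin
  have hπ : (0:ℝ) < π := Real.pi_pos
  nlinarith [hfin]

theorem coeff_bound {a : ℕ → ℂ} {f : ℂ → ℂ} {a₀ : ℝ}
    (hsum : ∀ z ∈ ball (0 : ℂ) 1, HasSum (fun n => a n * z ^ n) (f z))
    (hre : ∀ z ∈ ball (0 : ℂ) 1, (f z).re < 1)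
    (ha0 : a 0 = (a₀ : ℝ)) {n : ℕ} (hn : 1 ≤ n) :
    ‖a n‖ ≤ 2 * (1 - a₀) := by
  have hlim : Tendsto (fun s : ℝ => ‖a n‖ * s ^ n) (nhdsWithin 1 (Set.Iio 1))
      (nhds (‖a n‖)) := by
    have hc : Continuous (fun s : ℝ => ‖a n‖ * s ^ n) :=
      continuous_const.mul (continuous_pow n)
    have := (hc.tendsto (1:ℝ)).mono_left (nhdsWithin_le_nhds (s := Set.Iio 1))
    simpa using this
  refine le_of_tendsto hlim ?_
  filter_upwards [Ioo_mem_nhdsLT_of_mem (Set.mem_Ioc.2 ⟨zero_lt_one, le_refl (1:ℝ)⟩)] with s hs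
  exact coeff_r hsum hre ha0 hs.1.le hs.2 hn


end BohrAux

open BohrAux in
/-- If `Re f < 1`, `a₀ = f(0) ∈ [0,1)`, `p ∈ (0,1]` and `k ≥ 1`, then
`a₀^p + ∑_{m≥1} |a_{km}| r^{km} ≤ 1` for `r ≤ (p/(2+p))^{1/k}`. -/
theorem bohr_P_lacunary (f : ℂ → ℂ) (a : ℕ → ℂ) (a₀ p : ℝ) (k : ℕ)
    (hsum : ∀ z ∈ ball (0 : ℂ) 1, HasSum (fun n => a n * z ^ n) (f z))
    (hre : ∀ z ∈ ball (0 : ℂ) 1, (f z).re < 1)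
    (ha0 : a 0 = (a₀ : ℂ)) (h0 : 0 ≤ a₀) (h1 : a₀ < 1)
    (hp0 : 0 < p) (hp1 : p ≤ 1) (hk : 1 ≤ k)
    (r : ℝ) (hr0 : 0 ≤ r) (hr : r ≤ (p / (2 + p)) ^ ((1 : ℝ) / k)) :
    a₀ ^ p + ∑' m : ℕ, ‖a (k * (m + 1))‖ * r ^ (k * (m + 1)) ≤ 1 := by
  have h2p : (0:ℝ) < 2 + p := by linarith
  set q : ℝ := p / (2 + p) with hq
  have hq0 : 0 ≤ q := by positivity
  have hq1 : q < 1 := by rw [hq, div_lt_one h2p]; linarith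
  -- ρ = r^k ≤ q
  set ρ : ℝ := r ^ k with hρ
  have hρ0 : 0 ≤ ρ := pow_nonneg hr0 k
  have hρq : ρ ≤ q := by
    have h2 : r ^ k ≤ (q ^ ((1:ℝ)/k)) ^ k := pow_le_pow_left₀ hr0 hr k
    have h3 : (q ^ ((1:ℝ)/k)) ^ k = q := by
      rw [← Real.rpow_natCast (q ^ ((1:ℝ)/k)) k, ← Real.rpow_mul hq0, one_div,
        inv_mul_cancel₀ (Nat.cast_ne_zero.2 (by omega)), Real.rpow_one]
    rw [hρ]
    rw [h3] at h2
    exact h2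
  have hρ1 : ρ < 1 := lt_of_le_of_lt hρq hq1
  -- termwise bound
  have hC0 : (0:ℝ) ≤ 2 * (1 - a₀) := by linarith
  have hterm : ∀ m : ℕ, ‖a (k * (m + 1))‖ * r ^ (k * (m + 1))
      ≤ 2 * (1 - a₀) * ρ ^ (m + 1) := by
    intro m
    have h4 : ‖a (k * (m + 1))‖ ≤ 2 * (1 - a₀) :=
      coeff_bound hsum hre ha0 (by nlinarith [Nat.one_le_iff_ne_zero.mp hk])
    have h5 : r ^ (k * (m + 1)) = ρ ^ (m + 1) := by
      rw [hρ, ← pow_mul]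
    rw [h5]
    exact mul_le_mul_of_nonneg_right h4 (pow_nonneg hρ0 _)
  -- geometric sum
  have hgeo : Summable (fun m : ℕ => 2 * (1 - a₀) * ρ ^ (m + 1)) := by
    have : Summable (fun m : ℕ => ρ ^ m) := summable_geometric_of_lt_one hρ0 hρ1
    simpa [pow_succ, mul_comm, mul_assoc, mul_left_comm] using (this.mul_left (2 * (1 - a₀) * ρ))
  have hsummable : Summable (fun m : ℕ => ‖a (k * (m + 1))‖ * r ^ (k * (m + 1))) :=
    Summable.of_nonneg_of_le (fun m => by positivity) hterm hgeo
  have htsum : (∑' m : ℕ, ‖a (k * (m + 1))‖ * r ^ (k * (m + 1)))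
      ≤ 2 * (1 - a₀) * (ρ / (1 - ρ)) := by
    refine (Summable.tsum_le_tsum hterm hsummable hgeo).trans_eq ?_
    have : (∑' m : ℕ, 2 * (1 - a₀) * ρ ^ (m + 1))
        = 2 * (1 - a₀) * ρ * ∑' m : ℕ, ρ ^ m := by
      rw [← tsum_mul_left]
      congr 1
      funext m
      rw [pow_succ]
      ring
    rw [this, tsum_geometric_of_lt_one hρ0 hρ1]
    rw [div_eq_mul_inv]
    ring
  -- ρ/(1-ρ) ≤ p/2
  have hfrac : ρ / (1 - ρ) ≤ p / 2 := by
    rw [div_le_div_iff₀ (by linarith) (by norm_num)]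
    have := (le_div_iff₀ h2p).mp hρq
    nlinarith
  have hsum_le : (∑' m : ℕ, ‖a (k * (m + 1))‖ * r ^ (k * (m + 1)))
      ≤ p * (1 - a₀) := by
    refine htsum.trans ?_
    calc 2 * (1 - a₀) * (ρ / (1 - ρ)) ≤ 2 * (1 - a₀) * (p / 2) :=
          mul_le_mul_of_nonneg_left hfrac hC0
      _ = p * (1 - a₀) := by ring
  -- Bernoulli
  have hbern : a₀ ^ p ≤ 1 + p * (a₀ - 1) := by
    have := rpow_one_add_le_one_add_mul_self (s := a₀ - 1) (by linarith) hp0.le hp1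
    simpa using this
  linarith
end

section
/- If f is analytic on the unit disk with Re f(z) < 1 and a_0 = f(0) \in [0,1), then a_0 + \sum_{n=1}^\infty |a_n| r^n + |f(z) - a_0|^2 \le 1 for all |z| = r \le \sqrt{5} - 2. -/
open Metric

section BohrAux
open Finset

noncomputable def EE (N : ℕ) (m : ℤ) : ℂ := Complex.exp ((2 * Real.pi * m / N : ℝ) * Complex.I)

lemma EE_add (N : ℕ) (m₁ m₂ : ℤ) : EE N (m₁ + m₂) = EE N m₁ * EE N m₂ := by
  rw [EE, EE, EE, ← Complex.exp_add, ← add_mul, ← Complex.ofReal_add]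
  push_cast; ring_nf

lemma EE_abs (N : ℕ) (m : ℤ) : ‖EE N m‖ = 1 := Complex.norm_exp_ofReal_mul_I _

lemma EE_pow (N : ℕ) (m : ℤ) (j : ℕ) : EE N m ^ j = EE N (j * m) := by
  rw [EE, EE, ← Complex.exp_nat_mul]
  congr 1
  push_cast; ring

lemma EE_conj (N : ℕ) (m : ℤ) : (starRingEnd ℂ) (EE N m) = EE N (-m) := by
  rw [EE, EE, ← Complex.exp_conj, map_mul, Complex.conj_I, Complex.conj_ofReal]
  congr 1
  push_cast; ring

lemma EE_eq_one_iff (N : ℕ) (hN : 0 < N) (m : ℤ) : EE N m = 1 ↔ (N : ℤ) ∣ m := by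
  rw [EE, Complex.exp_eq_one_iff]
  constructor
  · rintro ⟨j, hj⟩
    refine ⟨j, ?_⟩
    have hI : ((2 * Real.pi * m / N : ℝ) : ℂ) = ((j : ℝ) * (2 * Real.pi) : ℝ) := by
      have h2 : ((2 * Real.pi * m / N : ℝ) : ℂ) * Complex.I = (((j : ℝ) * (2 * Real.pi) : ℝ) : ℂ) * Complex.I := by
        rw [hj]; push_cast; ring
      exact mul_right_cancel₀ Complex.I_ne_zero h2
    have := Complex.ofReal_inj.mp hI
    have hπ := Real.pi_ne_zero
    have hNz : (N : ℝ) ≠ 0 := Nat.cast_ne_zero.mpr hN.ne'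
    have hm : (m : ℝ) = j * N := by
      field_simp at this
      nlinarith [this, Real.pi_pos]
    have : m = j * N := by exact_mod_cast hm
    rw [this]; ring
  · rintro ⟨j, rfl⟩
    refine ⟨j, ?_⟩
    have hNz : (N : ℂ) ≠ 0 := Nat.cast_ne_zero.mpr hN.ne'
    push_cast
    field_simp

lemma geom_sum_eq_ite (N : ℕ) (ζ : ℂ) (h : ζ ^ N = 1) :
    ∑ j ∈ Finset.range N, ζ ^ j = if ζ = 1 then (N : ℂ) else 0 := by
  split_ifs with h1
  · simp [h1]
  · rw [geom_sum_eq h1, h]; simp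

lemma Gs_eq (N : ℕ) (hN : 0 < N) (m : ℤ) :
    ∑ j ∈ Finset.range N, EE N (j * m) = if (N : ℤ) ∣ m then (N : ℂ) else 0 := by
  have h1 : ∀ j ∈ Finset.range N, EE N ((j : ℤ) * m) = EE N m ^ j := fun j _ => (EE_pow N m j).symm
  rw [Finset.sum_congr rfl h1, geom_sum_eq_ite N _ (by
    rw [EE_pow, EE_eq_one_iff N hN]; exact ⟨m, rfl⟩)]
  congr 1
  · simp only [eq_iff_iff]; exact EE_eq_one_iff N hN m

lemma summable_abs_coeff (c : ℕ → ℂ) (g : ℂ → ℂ)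
    (hsum : ∀ z ∈ ball (0 : ℂ) 1, HasSum (fun k => c k * z ^ k) (g z))
    (ρ : ℝ) (h0 : 0 ≤ ρ) (h1 : ρ < 1) :
    Summable (fun k => ‖c k‖ * ρ ^ k) := by
  set ρ' : ℝ := (ρ + 1) / 2 with hρ'
  have hρρ' : ρ < ρ' := by rw [hρ']; linarith
  have hρ'1 : ρ' < 1 := by rw [hρ']; linarith
  have hρ'0 : 0 < ρ' := by rw [hρ']; linarith
  have hmem : ((ρ' : ℂ)) ∈ ball (0 : ℂ) 1 := by
    simp [abs_of_pos hρ'0, hρ'1]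
  have hs := (hsum _ hmem).summable
  have htend : Filter.Tendsto (fun k => ‖c k‖ * ρ' ^ k) Filter.atTop (nhds 0) := by
    have := hs.tendsto_atTop_zero.norm
    simp only [norm_zero] at this
    convert this using 2 with k
    rw [norm_mul, norm_pow, Complex.norm_real, Real.norm_eq_abs, abs_of_pos hρ'0]
  have hev : ∀ᶠ k in Filter.atTop, ‖c k‖ * ρ' ^ k ≤ 1 :=
    htend.eventually_le_const (by norm_num)
  obtain ⟨K, hK⟩ := Filter.eventually_atTop.mp hev
  rw [← summable_nat_add_iff K]
  set q : ℝ := ρ / ρ' with hq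
  have hq0 : 0 ≤ q := div_nonneg h0 hρ'0.le
  have hq1 : q < 1 := (div_lt_one hρ'0).mpr hρρ'
  apply Summable.of_nonneg_of_le (fun k => by positivity) (fun k => ?_)
    (((summable_geometric_of_lt_one hq0 hq1).mul_left (q ^ K)).congr
      (fun k => by rw [← pow_add]))
  have hρeq : ρ = ρ' * q := by rw [hq, mul_div_assoc', mul_comm, mul_div_assoc, div_self hρ'0.ne', mul_one]
  calc ‖c (k + K)‖ * ρ ^ (k + K)
      = (‖c (k + K)‖ * ρ' ^ (k + K)) * q ^ (k + K) := by
        rw [hρeq, mul_pow]; ring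
    _ ≤ 1 * q ^ (k + K) := by
        apply mul_le_mul_of_nonneg_right (hK _ (by omega)) (by positivity)
    _ = q ^ (K + k) := by rw [one_mul, add_comm]

lemma main_ineq (c : ℕ → ℂ) (g : ℂ → ℂ)
    (hsum : ∀ z ∈ ball (0 : ℂ) 1, HasSum (fun k => c k * z ^ k) (g z))
    (hre : ∀ z ∈ ball (0 : ℂ) 1, 0 ≤ (g z).re)
    (n : ℕ) (hn : 1 ≤ n) (ρ : ℝ) (hρ0 : 0 < ρ) (hρ1 : ρ < 1)
    (N : ℕ) (hN : 2 * n < N) :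
    ‖c n‖ * ρ ^ n ≤ 2 * (c 0).re
      + 4 * ∑' k, ‖c (k + (N - n))‖ * ρ ^ (k + (N - n)) := by
  have hsum_abs := summable_abs_coeff c g hsum ρ hρ0.le hρ1
  -- nonnegativity of (c 0).re
  have hg0 : g 0 = c 0 := by
    have h00 : HasSum (fun k => c k * (0 : ℂ) ^ k) (g 0) := hsum 0 (by simp)
    have h01 : HasSum (fun k => c k * (0 : ℂ) ^ k) (c 0) := by
      have heq : (fun k => c k * (0 : ℂ) ^ k) = fun k => if k = 0 then c 0 else 0 := by
        funext k; cases k <;> simp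
      rw [heq]; exact hasSum_ite_eq 0 (c 0)
    exact h00.unique h01
  have hre0 : 0 ≤ (c 0).re := by
    rw [← hg0]; exact hre 0 (by simp)
  have htsum_nonneg : 0 ≤ ∑' k, ‖c (k + (N - n))‖ * ρ ^ (k + (N - n)) :=
    tsum_nonneg fun k => by positivity
  by_cases hcn : c n = 0
  · simp only [hcn, norm_zero, zero_mul]
    linarith
  have habs_cn : (0 : ℝ) < ‖c n‖ := by
    simpa [norm_pos_iff] using hcn
  set u : ℂ := -(c n) / (‖c n‖ : ℂ) with hu_def
  have habs_cnC : (‖c n‖ : ℂ) ≠ 0 := by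
    exact_mod_cast habs_cn.ne'
  have hu_abs : ‖u‖ = 1 := by
    rw [hu_def, norm_div, norm_neg, Complex.norm_real, Real.norm_eq_abs, abs_of_pos habs_cn,
      div_self habs_cn.ne']
  have hu2 : (starRingEnd ℂ) u * c n = -(‖c n‖ : ℂ) := by
    rw [hu_def, map_div₀, map_neg, Complex.conj_ofReal]
    rw [div_mul_eq_mul_div, neg_mul, ← Complex.normSq_eq_conj_mul_self]
    rw [Complex.normSq_eq_norm_sq]
    field_simp
    push_cast
    ring
  set W : ℕ → ℝ := fun j => 1 + (u * EE N (j * n)).re with hW_def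
  have hW : ∀ j, 0 ≤ W j := by
    intro j
    have h1 : |(u * EE N (j * n)).re| ≤ ‖u * EE N (j * n)‖ :=
      Complex.abs_re_le_norm _
    rw [norm_mul, hu_abs, EE_abs, mul_one] at h1
    have := abs_le.mp h1
    simp only [hW_def]
    linarith [this.1]
  set e : ℕ → ℂ := fun k => ∑ j ∈ Finset.range N, ((W j : ℝ) : ℂ) * EE N ((j : ℤ) * (k : ℤ))
    with he_def
  have hNpos : 0 < N := by omega
  have he_formula : ∀ k : ℕ, e k =
      (if (N : ℤ) ∣ (k : ℤ) then (N : ℂ) else 0)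
      + (u / 2) * (if (N : ℤ) ∣ ((n : ℤ) + (k : ℤ)) then (N : ℂ) else 0)
      + ((starRingEnd ℂ) u / 2) * (if (N : ℤ) ∣ ((k : ℤ) - (n : ℤ)) then (N : ℂ) else 0) := by
    intro k
    have hterm : ∀ j ∈ Finset.range N, ((W j : ℝ) : ℂ) * EE N ((j : ℤ) * (k : ℤ))
        = EE N ((j : ℤ) * (k : ℤ)) + (u / 2) * EE N ((j : ℤ) * ((n : ℤ) + (k : ℤ)))
          + ((starRingEnd ℂ) u / 2) * EE N ((j : ℤ) * ((k : ℤ) - (n : ℤ))) := by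
      intro j _
      have hre_eq : (((u * EE N (j * n)).re : ℝ) : ℂ)
          = (u * EE N (j * n) + (starRingEnd ℂ) (u * EE N (j * n))) / 2 := by
        rw [Complex.add_conj]
        push_cast
        ring
      simp only [hW_def]
      push_cast
      rw [hre_eq, map_mul, EE_conj]
      have h1 : EE N ((j : ℤ) * (n : ℤ)) * EE N ((j : ℤ) * (k : ℤ))
          = EE N ((j : ℤ) * ((n : ℤ) + (k : ℤ))) := by
        rw [← EE_add]; congr 1; ring
      have h2 : EE N (-((j : ℤ) * (n : ℤ))) * EE N ((j : ℤ) * (k : ℤ))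
          = EE N ((j : ℤ) * ((k : ℤ) - (n : ℤ))) := by
        rw [← EE_add]; congr 1; ring
      rw [← h1, ← h2]
      ring
    simp only [he_def]
    calc (∑ j ∈ Finset.range N, ((W j : ℝ) : ℂ) * EE N ((j : ℤ) * (k : ℤ)))
        = ∑ j ∈ Finset.range N, (EE N ((j : ℤ) * (k : ℤ))
            + (u / 2) * EE N ((j : ℤ) * ((n : ℤ) + (k : ℤ)))
            + ((starRingEnd ℂ) u / 2) * EE N ((j : ℤ) * ((k : ℤ) - (n : ℤ)))) :=
          Finset.sum_congr rfl hterm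
      _ = (∑ j ∈ Finset.range N, EE N ((j : ℤ) * (k : ℤ)))
            + (u / 2) * ∑ j ∈ Finset.range N, EE N ((j : ℤ) * ((n : ℤ) + (k : ℤ)))
            + ((starRingEnd ℂ) u / 2) * ∑ j ∈ Finset.range N, EE N ((j : ℤ) * ((k : ℤ) - (n : ℤ))) := by
          rw [Finset.sum_add_distrib, Finset.sum_add_distrib, Finset.mul_sum, Finset.mul_sum]
      _ = _ := by rw [Gs_eq N hNpos, Gs_eq N hNpos, Gs_eq N hNpos]
  have hndvd : ∀ m : ℤ, m ≠ 0 → |m| < N → ¬ (N : ℤ) ∣ m := by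
    intro m hm hlt hdvd
    have h1 : (N : ℤ) ≤ |m| := Int.le_of_dvd (abs_pos.mpr hm) ((dvd_abs _ _).mpr hdvd)
    omega
  have hndvd' : ∀ m : ℤ, m ≠ 0 → -(N : ℤ) < m → m < N → ¬ (N : ℤ) ∣ m :=
    fun m h1 h2 h3 => hndvd m h1 (abs_lt.mpr ⟨h2, h3⟩)
  have he0 : e 0 = N := by
    rw [he_formula 0]
    rw [if_pos (by exact dvd_zero _), if_neg (hndvd' _ (by omega) (by omega) (by omega)),
      if_neg (hndvd' _ (by omega) (by omega) (by omega))]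
    ring
  have hen : e n = (starRingEnd ℂ) u / 2 * N := by
    rw [he_formula n]
    rw [if_neg (hndvd' _ (by omega) (by omega) (by omega)),
      if_neg (hndvd' _ (by omega) (by omega) (by omega)), if_pos (by simp)]
    ring
  have hesmall : ∀ k : ℕ, k ≠ 0 → k ≠ n → k < N - n → e k = 0 := by
    intro k hk0 hkn hkM
    rw [he_formula k]
    rw [if_neg (hndvd' _ (by omega) (by omega) (by omega)),
      if_neg (hndvd' _ (by omega) (by omega) (by omega)),
      if_neg (hndvd' _ (by omega) (by omega) (by omega))]
    ring
  have habs_ite : ∀ m : ℤ, ‖if (N : ℤ) ∣ m then (N : ℂ) else 0‖ ≤ N := by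
    intro m; split_ifs <;> simp
  have hebound : ∀ k : ℕ, ‖e k‖ ≤ 2 * N := by
    intro k
    rw [he_formula k]
    have h1 := habs_ite (k : ℤ)
    have h2 := habs_ite ((n : ℤ) + (k : ℤ))
    have h3 := habs_ite ((k : ℤ) - (n : ℤ))
    have hcu : ‖(starRingEnd ℂ) u‖ = 1 := by
      rw [Complex.norm_conj, hu_abs]
    calc ‖_‖ ≤ ‖(if (N : ℤ) ∣ (k : ℤ) then (N : ℂ) else 0)
          + (u / 2) * (if (N : ℤ) ∣ ((n : ℤ) + (k : ℤ)) then (N : ℂ) else 0)‖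
          + ‖((starRingEnd ℂ) u / 2) * (if (N : ℤ) ∣ ((k : ℤ) - (n : ℤ)) then (N : ℂ) else 0)‖ :=
        norm_add_le _ _
      _ ≤ (‖if (N : ℤ) ∣ (k : ℤ) then (N : ℂ) else 0‖
          + ‖(u / 2) * (if (N : ℤ) ∣ ((n : ℤ) + (k : ℤ)) then (N : ℂ) else 0)‖)
          + ‖((starRingEnd ℂ) u / 2) * (if (N : ℤ) ∣ ((k : ℤ) - (n : ℤ)) then (N : ℂ) else 0)‖ := by
        exact add_le_add_left (norm_add_le _ _) _
      _ ≤ 2 * N := by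
        simp only [norm_mul, norm_div, hu_abs, hcu, Complex.norm_two, one_mul]
        nlinarith [h1, h2, h3]
  have hmemj : ∀ j : ℕ, ((ρ : ℂ) * EE N (j : ℤ)) ∈ ball (0 : ℂ) 1 := by
    intro j
    rw [mem_ball_zero_iff]
    rw [norm_mul, EE_abs, mul_one, Complex.norm_real, Real.norm_eq_abs, abs_of_pos hρ0]
    exact hρ1
  have hgj : ∀ j : ℕ, HasSum (fun k => ((W j : ℝ) : ℂ) * (c k * (ρ : ℂ) ^ k * EE N ((j : ℤ) * (k : ℤ))))
      (((W j : ℝ) : ℂ) * g ((ρ : ℂ) * EE N (j : ℤ))) := by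
    intro j
    have h := (hsum _ (hmemj j)).mul_left ((W j : ℝ) : ℂ)
    have heq : (fun k => ((W j : ℝ) : ℂ) * (c k * ((ρ : ℂ) * EE N (j : ℤ)) ^ k))
        = fun k => ((W j : ℝ) : ℂ) * (c k * (ρ : ℂ) ^ k * EE N ((j : ℤ) * (k : ℤ))) := by
      funext k
      rw [mul_pow, EE_pow, mul_comm (k : ℤ) (j : ℤ)]
      ring
    rw [heq] at h
    exact h
  set LHSsum := ∑ j ∈ Finset.range N, ((W j : ℝ) : ℂ) * g ((ρ : ℂ) * EE N (j : ℤ)) with hLHS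
  set F : ℕ → ℂ := fun k => c k * (ρ : ℂ) ^ k * e k with hF
  have hswap : LHSsum = ∑' k, F k := by
    have h1 : LHSsum = ∑ j ∈ Finset.range N,
        ∑' k, ((W j : ℝ) : ℂ) * (c k * (ρ : ℂ) ^ k * EE N ((j : ℤ) * (k : ℤ))) :=
      Finset.sum_congr rfl fun j _ => ((hgj j).tsum_eq).symm
    rw [h1, ← Summable.tsum_finsetSum (fun j _ => (hgj j).summable)]
    apply tsum_congr; intro k
    simp only [hF, he_def, Finset.mul_sum]
    apply Finset.sum_congr rfl; intro j _; ring
  have hLre : 0 ≤ LHSsum.re := by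
    rw [hLHS, Complex.re_sum]
    apply Finset.sum_nonneg; intro j _
    rw [Complex.re_ofReal_mul]
    exact mul_nonneg (hW j) (hre _ (hmemj j))
  set M := N - n with hM
  have hFnorm : ∀ k, ‖F k‖ ≤ 2 * N * (‖c k‖ * ρ ^ k) := by
    intro k
    simp only [hF, norm_mul, norm_pow, Complex.norm_real, Real.norm_eq_abs, abs_of_pos hρ0]
    nlinarith [hebound k, norm_nonneg (c k), pow_nonneg hρ0.le k,
      norm_nonneg (e k), mul_nonneg (norm_nonneg (c k)) (pow_nonneg hρ0.le k)]
  have hsum2 : Summable (fun k => 2 * (N : ℝ) * (‖c k‖ * ρ ^ k)) :=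
    hsum_abs.mul_left _
  have hFs : Summable F :=
    Summable.of_norm (Summable.of_nonneg_of_le (fun k => norm_nonneg _) hFnorm hsum2)
  have hF1norm : ∀ k, ‖(fun k => ite (k = 0) (0 : ℂ) (F k)) k‖ ≤ 2 * N * (‖c k‖ * ρ ^ k) := by
    intro k
    by_cases h : k = 0
    · simp [h]; positivity
    · simp only [if_neg h]; exact hFnorm k
  have hFs1 : Summable (fun k => ite (k = 0) (0 : ℂ) (F k)) :=
    Summable.of_norm (Summable.of_nonneg_of_le (fun k => norm_nonneg _) hF1norm hsum2)
  have hsplit : ∑' k, F k = F 0 + (F n + ∑' k, ite (k = n) 0 (ite (k = 0) 0 (F k))) := by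
    rw [Summable.tsum_eq_add_tsum_ite hFs 0, Summable.tsum_eq_add_tsum_ite hFs1 n]
    congr 2
    rw [if_neg (by omega : ¬ n = 0)]
  set R := ∑' k, ite (k = n) (0 : ℂ) (ite (k = 0) 0 (F k)) with hR
  set wv : ℕ → ℝ := fun k => if k < M then 0 else 2 * N * (‖c k‖ * ρ ^ k) with hwv
  have hwv_le : ∀ k, wv k ≤ 2 * N * (‖c k‖ * ρ ^ k) := by
    intro k
    simp only [hwv]
    split_ifs
    · positivity
    · exact le_refl _
  have hwvs : Summable wv :=
    Summable.of_nonneg_of_le (fun k => by simp only [hwv]; split_ifs <;> positivity) hwv_le hsum2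
  have hRk : ∀ k, ‖ite (k = n) (0 : ℂ) (ite (k = 0) 0 (F k))‖ ≤ wv k := by
    intro k
    by_cases hkM : k < M
    · have hz : ite (k = n) (0 : ℂ) (ite (k = 0) 0 (F k)) = 0 := by
        by_cases h1 : k = n
        · rw [if_pos h1]
        · rw [if_neg h1]
          by_cases h2 : k = 0
          · rw [if_pos h2]
          · rw [if_neg h2, hF]
            simp only []
            rw [hesmall k h2 h1 hkM, mul_zero]
      rw [hz, norm_zero, hwv]
      simp only [if_pos hkM]
      exact le_refl 0
    · have hwveq : wv k = 2 * (N : ℝ) * (‖c k‖ * ρ ^ k) := by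
        simp only [hwv]; rw [if_neg hkM]
      rw [hwveq]
      by_cases h1 : k = n
      · rw [if_pos h1, norm_zero]; positivity
      · rw [if_neg h1]
        by_cases h2 : k = 0
        · rw [if_pos h2, norm_zero]; positivity
        · rw [if_neg h2]; exact hFnorm k
  have hRnorms : Summable (fun k => ‖ite (k = n) (0 : ℂ) (ite (k = 0) 0 (F k))‖) :=
    Summable.of_nonneg_of_le (fun k => norm_nonneg _) hRk hwvs
  have hRb : ‖R‖ ≤ 2 * N * ∑' k, ‖c (k + M)‖ * ρ ^ (k + M) := by
    have h1 : ‖R‖ ≤ ∑' k, wv k :=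
      le_trans (norm_tsum_le_tsum_norm hRnorms) (Summable.tsum_le_tsum hRk hRnorms hwvs)
    have h2 : ∑' k, wv k = 2 * N * ∑' k, ‖c (k + M)‖ * ρ ^ (k + M) := by
      rw [← Summable.sum_add_tsum_nat_add M hwvs]
      have h3 : ∑ i ∈ Finset.range M, wv i = 0 :=
        Finset.sum_eq_zero fun i hi => by simp only [hwv]; rw [if_pos (Finset.mem_range.mp hi)]
      have h4 : ∑' k, wv (k + M) = 2 * N * ∑' k, ‖c (k + M)‖ * ρ ^ (k + M) := by
        rw [← tsum_mul_left]
        apply tsum_congr; intro k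
        simp only [hwv]
        rw [if_neg (by omega)]
      rw [h3, h4, zero_add]
    rw [← h2]; exact h1
  have hF0re : (F 0).re = (c 0).re * N := by
    have : F 0 = c 0 * (N : ℂ) := by
      simp only [hF, he0, pow_zero, mul_one]
    rw [this, Complex.mul_re]
    simp
  have hFnre : (F n).re = -(‖c n‖ * ρ ^ n * N / 2) := by
    have heq : F n = ((-(‖c n‖) * ρ ^ n * N / 2 : ℝ) : ℂ) := by
      simp only [hF]
      rw [hen]
      calc c n * (ρ : ℂ) ^ n * ((starRingEnd ℂ) u / 2 * N)
          = ((starRingEnd ℂ) u * c n) * (ρ : ℂ) ^ n * N / 2 := by ring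
        _ = (-(‖c n‖ : ℂ)) * (ρ : ℂ) ^ n * N / 2 := by rw [hu2]
        _ = _ := by push_cast; ring
    rw [heq, Complex.ofReal_re]
    ring
  have hRre : -(2 * N * ∑' k, ‖c (k + M)‖ * ρ ^ (k + M)) ≤ R.re := by
    have h1 : |R.re| ≤ ‖R‖ := Complex.abs_re_le_norm R
    have h2 := (abs_le.mp h1).1
    linarith
  have hfinal : 0 ≤ (c 0).re * N - ‖c n‖ * ρ ^ n * N / 2 + R.re := by
    have h1 : LHSsum.re = (F 0).re + (F n).re + R.re := by
      rw [hswap, hsplit]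
      simp only [Complex.add_re]
      ring
    rw [h1, hF0re, hFnre] at hLre
    linarith
  have hNposR : (0 : ℝ) < N := by exact_mod_cast hNpos
  set τ := ∑' k, ‖c (k + M)‖ * ρ ^ (k + M) with hτ
  have hRre2 : R.re ≤ 2 * N * τ := by
    have := Complex.re_le_norm R
    linarith
  have hkey : ‖c n‖ * ρ ^ n * N / 2 ≤ (c 0).re * N + 2 * N * τ := by linarith
  nlinarith [hkey, hNposR, htsum_nonneg]

lemma caratheodory (c : ℕ → ℂ) (g : ℂ → ℂ)
    (hsum : ∀ z ∈ ball (0 : ℂ) 1, HasSum (fun k => c k * z ^ k) (g z))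
    (hre : ∀ z ∈ ball (0 : ℂ) 1, 0 ≤ (g z).re)
    (n : ℕ) (hn : 1 ≤ n) : ‖c n‖ ≤ 2 * (c 0).re := by
  have hρstep : ∀ ρ : ℝ, 0 < ρ → ρ < 1 → ‖c n‖ * ρ ^ n ≤ 2 * (c 0).re := by
    intro ρ hρ0 hρ1
    apply le_of_forall_pos_le_add
    intro ε hε
    have hsum_abs := summable_abs_coeff c g hsum ρ hρ0.le hρ1
    have hτ : Filter.Tendsto (fun i => ∑' k, ‖c (k + i)‖ * ρ ^ (k + i))
        Filter.atTop (nhds 0) := tendsto_sum_nat_add (fun m => ‖c m‖ * ρ ^ m)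
    have hev : ∀ᶠ i in Filter.atTop,
        (∑' k, ‖c (k + i)‖ * ρ ^ (k + i)) < ε / 4 :=
      hτ.eventually_lt_const (by positivity)
    obtain ⟨i₀, hi₀⟩ := Filter.eventually_atTop.mp hev
    set M := max i₀ (n + 1) with hM
    set N := M + n with hN
    have h2n : 2 * n < N := by omega
    have hmain := main_ineq c g hsum hre n hn ρ hρ0 hρ1 N h2n
    have hNM : N - n = M := by omega
    rw [hNM] at hmain
    have htail : (∑' k, ‖c (k + M)‖ * ρ ^ (k + M)) < ε / 4 :=
      hi₀ M (le_max_left _ _)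
    linarith
  have htend : Filter.Tendsto (fun ρ : ℝ => ‖c n‖ * ρ ^ n)
      (nhdsWithin 1 (Set.Iio 1)) (nhds (‖c n‖ * 1 ^ n)) :=
    ((continuous_const.mul (continuous_pow n)).tendsto 1).mono_left nhdsWithin_le_nhds
  have hev : ∀ᶠ ρ in nhdsWithin (1 : ℝ) (Set.Iio 1),
      ‖c n‖ * ρ ^ n ≤ 2 * (c 0).re := by
    filter_upwards [Ioo_mem_nhdsLT_of_mem (by constructor <;> norm_num : (1:ℝ) ∈ Set.Ioc 0 1)]
      with ρ hρ
    exact hρstep ρ hρ.1 hρ.2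
  have := le_of_tendsto htend hev
  simpa using this

end BohrAux

set_option maxHeartbeats 1000000 in
/-- If `Re f < 1` and `a₀ = f(0) ∈ [0,1)`, then
`a₀ + ∑_{n≥1} |aₙ| rⁿ + |f(z)-a₀|² ≤ 1` for `|z| = r ≤ √5 - 2`. -/
theorem bohr_P_rogosinski (f : ℂ → ℂ) (a : ℕ → ℂ) (a₀ : ℝ)
    (hsum : ∀ z ∈ ball (0 : ℂ) 1, HasSum (fun n => a n * z ^ n) (f z))
    (hre : ∀ z ∈ ball (0 : ℂ) 1, (f z).re < 1)
    (ha0 : a 0 = (a₀ : ℂ)) (h0 : 0 ≤ a₀) (h1 : a₀ < 1)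
    (z : ℂ) (hz : ‖z‖ ≤ Real.sqrt 5 - 2) :
    a₀ + ∑' n : ℕ, ‖a (n + 1)‖ * ‖z‖ ^ (n + 1)
      + ‖f z - (a₀ : ℂ)‖ ^ 2 ≤ 1 := by
  set r := ‖z‖ with hr
  have hr0 : 0 ≤ r := norm_nonneg z
  have hs5 : Real.sqrt 5 * Real.sqrt 5 = 5 := Real.mul_self_sqrt (by norm_num)
  have hs2 : 2 ≤ Real.sqrt 5 := by nlinarith [Real.sqrt_nonneg 5]
  have hs3 : Real.sqrt 5 < 3 := by nlinarith [Real.sqrt_nonneg 5]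
  have hr1 : r < 1 := by linarith
  have hd : 0 < 1 - r := by linarith
  have hzball : z ∈ ball (0 : ℂ) 1 := by
    rw [mem_ball_zero_iff]; exact hr1
  set A := 1 - a₀ with hA
  have hA0 : 0 < A := by simp only [hA]; linarith
  have hA1 : A ≤ 1 := by simp only [hA]; linarith
  set c : ℕ → ℂ := fun k => (if k = 0 then 1 else 0) - a k with hc
  set g : ℂ → ℂ := fun w => 1 - f w with hg
  have hsum' : ∀ w ∈ ball (0 : ℂ) 1, HasSum (fun k => c k * w ^ k) (g w) := by
    intro w hw
    have h1' : HasSum (fun k => (if k = 0 then (1 : ℂ) else 0) * w ^ k) 1 := by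
      have heq : (fun k => (if k = 0 then (1 : ℂ) else 0) * w ^ k)
          = fun k => if k = 0 then (1 : ℂ) else 0 := by
        funext k; by_cases h : k = 0 <;> simp [h]
      rw [heq]
      exact hasSum_ite_eq 0 1
    have := h1'.sub (hsum w hw)
    simp only [hc, hg]
    convert this using 2 with k
    · rfl
    · ring
  have hre' : ∀ w ∈ ball (0 : ℂ) 1, 0 ≤ (g w).re := by
    intro w hw
    simp only [hg, Complex.sub_re, Complex.one_re]
    linarith [hre w hw]
  have hc0 : (c 0).re = A := by
    simp [hc, ha0, hA]
  have hcoef : ∀ k : ℕ, ‖a (k + 1)‖ ≤ 2 * A := by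
    intro k
    have h := caratheodory c g hsum' hre' (k + 1) (by omega)
    rw [hc0] at h
    have hck : c (k + 1) = -a (k + 1) := by simp [hc]
    rwa [hck, norm_neg] at h
  set S := ∑' n : ℕ, ‖a (n + 1)‖ * r ^ (n + 1) with hS
  have hgeom : Summable (fun n : ℕ => 2 * A * r * r ^ n) :=
    (summable_geometric_of_lt_one hr0 hr1).mul_left _
  have hterm_le : ∀ n : ℕ, ‖a (n + 1)‖ * r ^ (n + 1) ≤ 2 * A * r * r ^ n := by
    intro n
    have h := mul_le_mul_of_nonneg_right (hcoef n) (pow_nonneg hr0 (n + 1))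
    calc ‖a (n + 1)‖ * r ^ (n + 1) ≤ 2 * A * r ^ (n + 1) := h
      _ = 2 * A * r * r ^ n := by ring
  have hSsum : Summable (fun n : ℕ => ‖a (n + 1)‖ * r ^ (n + 1)) :=
    Summable.of_nonneg_of_le (fun n => by positivity) hterm_le hgeom
  have hS0 : 0 ≤ S := tsum_nonneg fun n => by positivity
  have hSle : S ≤ 2 * A * r / (1 - r) := by
    have h2 : S ≤ ∑' n : ℕ, 2 * A * r * r ^ n := Summable.tsum_le_tsum hterm_le hSsum hgeom
    have h3 : ∑' n : ℕ, 2 * A * r * r ^ n = 2 * A * r * (1 - r)⁻¹ := by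
      rw [tsum_mul_left, tsum_geometric_of_lt_one hr0 hr1]
    calc S ≤ 2 * A * r * (1 - r)⁻¹ := h2.trans_eq h3
      _ = 2 * A * r / (1 - r) := by rw [div_eq_mul_inv]
  have hSd : S * (1 - r) ≤ 2 * A * r := by
    rwa [← le_div_iff₀ hd]
  have hfz : ‖f z - (a₀ : ℂ)‖ ≤ S := by
    have h := hsum z hzball
    have h' : HasSum (fun n => a (n + 1) * z ^ (n + 1)) (f z - ∑ i ∈ Finset.range 1, a i * z ^ i) :=
      ((hasSum_nat_add_iff' 1).mpr h)
    have h'' : HasSum (fun n => a (n + 1) * z ^ (n + 1)) (f z - (a₀ : ℂ)) := by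
      simpa [ha0] using h'
    rw [← h''.tsum_eq]
    have hnorm : ∀ n : ℕ, ‖a (n + 1) * z ^ (n + 1)‖ = ‖a (n + 1)‖ * r ^ (n + 1) := by
      intro n
      rw [norm_mul, norm_pow]
    have hns : Summable (fun n => ‖a (n + 1) * z ^ (n + 1)‖) := by
      simp only [hnorm]; exact hSsum
    calc ‖∑' n, a (n + 1) * z ^ (n + 1)‖ ≤ ∑' n, ‖a (n + 1) * z ^ (n + 1)‖ :=
        norm_tsum_le_tsum_norm hns
      _ = S := by rw [hS]; exact tsum_congr hnorm
  have hfz2 : ‖f z - (a₀ : ℂ)‖ ^ 2 ≤ S ^ 2 :=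
    pow_le_pow_left₀ (norm_nonneg _) hfz 2
  clear_value S A r
  have hquad : r ^ 2 + 4 * r ≤ 1 := by nlinarith
  have hgoal : S + S ^ 2 ≤ A := by
    have h1' : S * (1 - r) * (1 - r) ≤ 2 * A * r * (1 - r) :=
      mul_le_mul_of_nonneg_right hSd hd.le
    have h2' : (S * (1 - r)) ^ 2 ≤ (2 * A * r) ^ 2 :=
      pow_le_pow_left₀ (by positivity) hSd 2
    have h3' : 0 ≤ A * (1 - 4 * r - r ^ 2) := mul_nonneg hA0.le (by nlinarith)
    have hd2 : 0 < (1 - r) ^ 2 := by positivity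
    have hAr : 0 ≤ r ^ 2 * (A - A * A) := mul_nonneg (sq_nonneg r) (by nlinarith)
    have h4 : S * (1 - r) ^ 2 + S ^ 2 * (1 - r) ^ 2 ≤ A * (1 - r) ^ 2 := by
      calc S * (1 - r) ^ 2 + S ^ 2 * (1 - r) ^ 2
          = S * (1 - r) * (1 - r) + (S * (1 - r)) ^ 2 := by ring
        _ ≤ 2 * A * r * (1 - r) + (2 * A * r) ^ 2 := add_le_add h1' h2'
        _ ≤ A * (1 - r) ^ 2 := by nlinarith [h3', hAr]
    nlinarith [h4, hd2]
  calc a₀ + S + ‖f z - (a₀ : ℂ)‖ ^ 2 ≤ a₀ + S + S ^ 2 := by linarith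
    _ ≤ a₀ + A := by linarith
    _ = 1 := by rw [hA]; ring
end
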